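/- arXiv:2510.17107 — 5 statements merged into one kernel-verified Lean document; each statement's English description precedes it below -/
import Mathlib

section
/- Let Q ∈ 𝒞 and n ∈ ℕ₀. Then the layer unions S^{(n)} and S^{(n+2)} are disjoint: S^{(n)} ∩ S^{(n+2)} = ∅. -/
open MeasureTheory Real Set Metric Filter
open scoped BigOperators ENNReal

noncomputable section

/-- Three-dimensional Euclidean space. -/
abbrev E3 : Type := EuclideanSpace ℝ (Fin 3)

/-- The `i`-th standard basis vector of `ℝ³`. -/
def ev3 (i : Fin 3) : E3 := EuclideanSpace.single i (1 : ℝ)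

/-- A (closed) ball, encoded by its center and its radius. -/
abbrev BallData : Type := E3 × ℝ

/-- The set of points of a ball. -/
def ballSet (B : BallData) : Set E3 := Metric.closedBall B.1 B.2

/-- The volume `(4π/3) r³` of a ball. -/
def ballVol (B : BallData) : ℝ := (4 * Real.pi / 3) * B.2 ^ 3

/-- A cover `𝒞 = 𝒞^{σ,η}` of `ℝ³` by closed balls of radius `≥ 1` (volume `≥ 4π/3`) such that
(i) each ball intersects at most `σ` other balls of `𝒞`, and (ii) intersecting balls have
comparable sizes: `1/η ≤ |Q|^{1/3}/|Q'|^{1/3} ≤ η`. -/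
structure IsCover (σ η : ℝ) (𝒞 : Set BallData) : Prop where
  radius_ge_one : ∀ B ∈ 𝒞, (1 : ℝ) ≤ B.2
  covers : ∀ x : E3, ∃ B ∈ 𝒞, x ∈ ballSet B
  overlap_finite : ∀ B ∈ 𝒞, {B' | B' ∈ 𝒞 ∧ B' ≠ B ∧ (ballSet B ∩ ballSet B').Nonempty}.Finite
  overlap_card : ∀ B ∈ 𝒞,
    (({B' | B' ∈ 𝒞 ∧ B' ≠ B ∧ (ballSet B ∩ ballSet B').Nonempty}.ncard : ℝ)) ≤ σ
  comparable_lb : ∀ B ∈ 𝒞, ∀ B' ∈ 𝒞, (ballSet B ∩ ballSet B').Nonempty →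
    1 / η ≤ ballVol B ^ ((1:ℝ)/3) / ballVol B' ^ ((1:ℝ)/3)
  comparable_ub : ∀ B ∈ 𝒞, ∀ B' ∈ 𝒞, (ballSet B ∩ ballSet B').Nonempty →
    ballVol B ^ ((1:ℝ)/3) / ballVol B' ^ ((1:ℝ)/3) ≤ η

/-- The union `Q^{(n)}` of the layers `0,…,n` of balls of `𝒞` around `Q`:
`Q^{(0)} = Q` and `Q^{(n+1)} = ⋃ {B ∈ 𝒞 : B ∩ Q^{(n)} ≠ ∅}`. -/
def layerU (𝒞 : Set BallData) (Q : BallData) : ℕ → Set E3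
  | 0 => ballSet Q
  | n + 1 => ⋃ B ∈ {B | B ∈ 𝒞 ∧ (ballSet B ∩ layerU 𝒞 Q n).Nonempty}, ballSet B

/-- The collection `P^{(n)}` of balls in layers `0` to `n`: `P^{(0)} = {Q}` and for `n ≥ 1`,
`P^{(n)} = {B ∈ 𝒞 : B ∩ Q^{(n-1)} ≠ ∅}`. -/
def PColl (𝒞 : Set BallData) (Q : BallData) : ℕ → Set BallData
  | 0 => {Q}
  | n + 1 => {B | B ∈ 𝒞 ∧ (ballSet B ∩ layerU 𝒞 Q n).Nonempty}

/-- The union `S^{(n)}` of balls of the `n`-th layer: balls contained in `Q^{(n)}` but not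
in `Q^{(n-1)}` (for `n ≥ 1`; `n - 1` is truncated subtraction). -/
def SLayer (𝒞 : Set BallData) (Q : BallData) (n : ℕ) : Set E3 :=
  ⋃ B ∈ {B | B ∈ 𝒞 ∧ ballSet B ⊆ layerU 𝒞 Q n ∧ ¬ ballSet B ⊆ layerU 𝒞 Q (n - 1)}, ballSet B

/-- Distance between two subsets of `ℝ³`. -/
def setDistance (A B : Set E3) : ℝ := sInf {d : ℝ | ∃ a ∈ A, ∃ b ∈ B, d = dist a b}

variable {F : Type} [NormedAddCommGroup F] [NormedSpace ℝ F]

/-- The square of the Morrey-type norm `‖f‖_M`, i.e.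
`‖f‖_M² = sup_{B ∈ 𝒞} |B|^{-2/3} ∫_B |f|²`. -/
def MnSq (𝒞 : Set BallData) (f : E3 → F) : ℝ :=
  sSup {a : ℝ | ∃ B ∈ 𝒞, a = ballVol B ^ (-(2:ℝ)/3) * ∫ x in ballSet B, ‖f x‖ ^ 2}

/-- Membership in the space `M = M^{2,2}_𝒞`. -/
def MemM (𝒞 : Set BallData) (f : E3 → F) : Prop :=
  (∀ B ∈ 𝒞, IntegrableOn (fun x => ‖f x‖ ^ 2) (ballSet B) volume) ∧
  BddAbove {a : ℝ | ∃ B ∈ 𝒞, a = ballVol B ^ (-(2:ℝ)/3) * ∫ x in ballSet B, ‖f x‖ ^ 2}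

/-- The Morrey-type norm `‖f‖_M`. -/
def Mn (𝒞 : Set BallData) (f : E3 → F) : ℝ := Real.sqrt (MnSq 𝒞 f)

/-- `|∇f|² = ∑_i |∂_i f|²` (Frobenius norm squared of the spatial gradient). -/
def gradSq (f : E3 → F) (x : E3) : ℝ := ∑ i : Fin 3, ‖fderiv ℝ f x (ev3 i)‖ ^ 2

/-- `α_t[u] = esssup_{0<s<t} ‖u(s)‖_M²`. -/
def alphaT (𝒞 : Set BallData) (u : ℝ → E3 → F) (t : ℝ) : ℝ :=
  essSup (fun s => MnSq 𝒞 (u s)) (volume.restrict (Ioo 0 t))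

/-- `β_t[u] = sup_{B ∈ 𝒞} |B|^{-2/3} ∫₀ᵗ ∫_B |∇u|²`. -/
def betaT (𝒞 : Set BallData) (u : ℝ → E3 → F) (t : ℝ) : ℝ :=
  sSup {a : ℝ | ∃ B ∈ 𝒞,
    a = ballVol B ^ (-(2:ℝ)/3) * ∫ s in Ioc (0:ℝ) t, ∫ x in ballSet B, gradSq (u s) x}

/-- Divergence of a vector field. -/
def divg (f : E3 → E3) (x : E3) : ℝ := ∑ i : Fin 3, fderiv ℝ f x (ev3 i) i

/-- Laplacian of a scalar function. -/
def lapl (φ : E3 → ℝ) (x : E3) : ℝ :=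
  ∑ i : Fin 3, fderiv ℝ (fun y => fderiv ℝ φ y (ev3 i)) x (ev3 i)

/-- The kernel `K_{ij}(z) = ∂_i∂_j (4π|z|)⁻¹ = (3 z_i z_j − δ_{ij}|z|²)/(4π|z|⁵)`. -/
def Kker (i j : Fin 3) (z : E3) : ℝ :=
  (3 * z i * z j - (if i = j then (1:ℝ) else 0) * ‖z‖ ^ 2) / (4 * Real.pi * ‖z‖ ^ 5)

/-- The kernel `L_j(z) = z_j/(4π|z|³)`. -/
def Lker (j : Fin 3) (z : E3) : ℝ := z j / (4 * Real.pi * ‖z‖ ^ 3)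

/-- Weak (distributional) divergence-freeness of a vector field on `ℝ³`. -/
def WeaklyDivFree (f : E3 → E3) : Prop :=
  ∀ φ : E3 → ℝ, ContDiff ℝ (⊤ : ℕ∞) φ → HasCompactSupport φ →
    (∫ x, ∑ i : Fin 3, f x i * fderiv ℝ φ x (ev3 i)) = 0



/-- The layer unions `S⁽ⁿ⁾` and `S⁽ⁿ⁺²⁾` are disjoint (equation (3.2) of the paper). -/
theorem slayers_disjoint (σ η : ℝ) (hσ : 0 < σ) (hη : 0 < η)
    (𝒞 : Set BallData) (hcov : IsCover σ η 𝒞)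
    (Q : BallData) (hQ : Q ∈ 𝒞) (n : ℕ) :
    SLayer 𝒞 Q n ∩ SLayer 𝒞 Q (n + 2) = ∅ := by
  ext x
  simp only [Set.mem_inter_iff, Set.mem_empty_iff_false, iff_false]
  rintro ⟨hx1, hx2⟩
  simp only [SLayer, Set.mem_iUnion, Set.mem_setOf_eq] at hx1 hx2
  obtain ⟨B, ⟨hB𝒞, hBsub, -⟩, hxB⟩ := hx1
  obtain ⟨B', ⟨hB'𝒞, -, hB'nsub⟩, hxB'⟩ := hx2
  apply hB'nsub
  have hne : (ballSet B' ∩ layerU 𝒞 Q n).Nonempty := ⟨x, hxB', hBsub hxB⟩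
  have : n + 2 - 1 = n + 1 := rfl
  rw [this]
  show ballSet B' ⊆ layerU 𝒞 Q (n + 1)
  intro y hy
  simp only [layerU, Set.mem_iUnion, Set.mem_setOf_eq]
  exact ⟨B', ⟨hB'𝒞, hne⟩, hy⟩

end
end

section
/- There exists a constant C = C(𝒞) > 0 such that |B|^{1/3} ≤ C(1 + |x_B|) (equivalently, r_B ≤ C'(1 + |x_B|)) for every ball B ∈ 𝒞, where x_B is the center of B. -/
open MeasureTheory Real Set Metric Filter
open scoped BigOperators ENNReal

noncomputable section

variable {F : Type} [NormedAddCommGroup F] [NormedSpace ℝ F]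

lemma vol_cbrt (r : ℝ) (hr : 0 ≤ r) :
    ((4 * Real.pi / 3) * r ^ 3) ^ ((1:ℝ)/3)
      = (4 * Real.pi / 3) ^ ((1:ℝ)/3) * r := by
  have hc : (0:ℝ) ≤ 4 * Real.pi / 3 := by positivity
  rw [Real.mul_rpow hc (by positivity)]
  congr 1
  rw [← Real.rpow_natCast r 3, ← Real.rpow_mul hr]
  norm_num

/-- Corollary 3.3: there is `C = C(𝒞) > 0` with `|B|^{1/3} ≤ C (1 + |x_B|)` for all
`B ∈ 𝒞`. -/
theorem ball_size_at_most_linear (σ η : ℝ) (hσ : 0 < σ) (hη : 0 < η)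
    (𝒞 : Set BallData) (hcov : IsCover σ η 𝒞) :
    ∃ C > (0:ℝ), ∀ B ∈ 𝒞, ballVol B ^ ((1:ℝ)/3) ≤ C * (1 + ‖B.1‖) := by
  obtain ⟨Q₀, hQ₀, h0Q₀⟩ := hcov.covers 0
  set c : ℝ := (4 * Real.pi / 3) ^ ((1:ℝ)/3) with hc
  have hcpos : 0 < c := by positivity
  refine ⟨η * (ballVol Q₀ ^ ((1:ℝ)/3)) + c, ?_, ?_⟩
  · have hr0 : (0:ℝ) < Q₀.2 := lt_of_lt_of_le one_pos (hcov.radius_ge_one Q₀ hQ₀)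
    have h1 : 0 < ballVol Q₀ ^ ((1:ℝ)/3) := by
      have : (0:ℝ) < ballVol Q₀ := by unfold ballVol; positivity
      positivity
    positivity
  · intro B hB
    have hrB : (1:ℝ) ≤ B.2 := hcov.radius_ge_one B hB
    have hvB : ballVol B ^ ((1:ℝ)/3) = c * B.2 := by
      unfold ballVol; exact vol_cbrt B.2 (by linarith)
    by_cases h0 : (0:E3) ∈ ballSet B
    · have hne : (ballSet B ∩ ballSet Q₀).Nonempty := ⟨0, h0, h0Q₀⟩
      have hub := hcov.comparable_ub B hB Q₀ hQ₀ hne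
      have hr0 : (0:ℝ) < Q₀.2 := lt_of_lt_of_le one_pos (hcov.radius_ge_one Q₀ hQ₀)
      have hQ₀pos : 0 < ballVol Q₀ ^ ((1:ℝ)/3) := by
        have : (0:ℝ) < ballVol Q₀ := by unfold ballVol; positivity
        positivity
      have h2 : ballVol B ^ ((1:ℝ)/3) ≤ η * (ballVol Q₀ ^ ((1:ℝ)/3)) := by
        rw [div_le_iff₀ hQ₀pos] at hub; linarith
      have hx : (0:ℝ) ≤ ‖B.1‖ := norm_nonneg _
      nlinarith [mul_nonneg (mul_pos hη hQ₀pos).le hx, mul_nonneg hcpos.le hx]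
    · have : ¬ dist (0:E3) B.1 ≤ B.2 := by
        simpa [ballSet, Metric.mem_closedBall] using h0
      rw [dist_zero_left] at this
      push_neg at this
      rw [hvB]
      have hr0 : (0:ℝ) < Q₀.2 := lt_of_lt_of_le one_pos (hcov.radius_ge_one Q₀ hQ₀)
      have hQ₀pos : 0 < ballVol Q₀ ^ ((1:ℝ)/3) := by
        have : (0:ℝ) < ballVol Q₀ := by unfold ballVol; positivity
        positivity
      nlinarith [mul_pos hη hQ₀pos, mul_lt_mul_of_pos_left this hcpos,
        mul_nonneg (mul_pos hη hQ₀pos).le (norm_nonneg B.1), norm_nonneg B.1]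


end
end

section
/- (Arbitrary points vs. centers.) Let Q, Q' ∈ 𝒞 be balls of radii r₁ and r₂ respectively such that Q' ⊄ Q^{(3)}. Then for all x ∈ Q and y ∈ Q': (1 − β)|x_Q − x_{Q'}| ≤ |x − y| ≤ 2|x_Q − x_{Q'}|, where β := (1 + 2/η²)^{−1/2} ∈ (0,1). -/
open MeasureTheory Real Set Metric Filter
open scoped BigOperators ENNReal

noncomputable section

variable {F : Type} [NormedAddCommGroup F] [NormedSpace ℝ F]

namespace PVC

/-- If two closed balls have center distance at most the sum of radii, they intersect. -/
lemma balls_touch {c₁ c₂ : E3} {r₁ r₂ : ℝ} (h₁ : 0 ≤ r₁) (h₂ : 0 ≤ r₂)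
    (h : dist c₁ c₂ ≤ r₁ + r₂) :
    (Metric.closedBall c₁ r₁ ∩ Metric.closedBall c₂ r₂).Nonempty := by
  rcases le_or_gt (dist c₁ c₂) r₁ with hd | hd
  · exact ⟨c₂, by simpa [Metric.mem_closedBall, dist_comm] using hd,
      by simp [Metric.mem_closedBall, h₂]⟩
  · have hdpos : 0 < dist c₁ c₂ := lt_of_le_of_lt h₁ hd
    refine ⟨c₁ + (r₁ / dist c₁ c₂) • (c₂ - c₁), ?_, ?_⟩
    · rw [Metric.mem_closedBall, dist_eq_norm]
      have : c₁ + (r₁ / dist c₁ c₂) • (c₂ - c₁) - c₁ = (r₁ / dist c₁ c₂) • (c₂ - c₁) := by abel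
      rw [this, norm_smul, Real.norm_eq_abs, abs_of_nonneg (by positivity)]
      rw [show ‖c₂ - c₁‖ = dist c₁ c₂ from by rw [dist_eq_norm']; ]
      field_simp
      exact le_rfl
    · rw [Metric.mem_closedBall, dist_eq_norm]
      have hre : c₁ + (r₁ / dist c₁ c₂) • (c₂ - c₁) - c₂ = (r₁ / dist c₁ c₂ - 1) • (c₂ - c₁) := by
        rw [sub_smul, one_smul]; abel
      rw [hre, norm_smul, Real.norm_eq_abs]
      have hle : r₁ / dist c₁ c₂ ≤ 1 := by
        rw [div_le_one hdpos]; exact hd.le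
      rw [abs_of_nonpos (by linarith), show ‖c₂ - c₁‖ = dist c₁ c₂ from by rw [dist_eq_norm']]
      have : (-(r₁ / dist c₁ c₂ - 1)) * dist c₁ c₂ = dist c₁ c₂ - r₁ := by
        field_simp
        ring
      rw [this]; linarith

/-- Disjoint balls are far apart. -/
lemma dist_of_disjoint {c₁ c₂ : E3} {r₁ r₂ : ℝ} (h₁ : 0 ≤ r₁) (h₂ : 0 ≤ r₂)
    (h : Metric.closedBall c₁ r₁ ∩ Metric.closedBall c₂ r₂ = ∅) :
    r₁ + r₂ < dist c₁ c₂ := by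
  by_contra hc
  push_neg at hc
  rcases balls_touch h₁ h₂ hc with ⟨z, hz⟩
  rw [h] at hz; exact hz

lemma vol_cbrt {B : BallData} (hr : 0 ≤ B.2) :
    ballVol B ^ ((1:ℝ)/3) = (4 * Real.pi / 3) ^ ((1:ℝ)/3) * B.2 := by
  have hπ : (0:ℝ) ≤ 4 * Real.pi / 3 := by positivity
  rw [ballVol, Real.mul_rpow hπ (by positivity)]
  congr 1
  rw [← Real.rpow_natCast B.2 3, ← Real.rpow_mul hr]
  norm_num

section
variable {σ η : ℝ} {𝒞 : Set BallData} (hcov : IsCover σ η 𝒞)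

include hcov

lemma radius_pos {B : BallData} (hB : B ∈ 𝒞) : 0 < B.2 :=
  lt_of_lt_of_le one_pos (hcov.radius_ge_one B hB)

lemma eta_ge_one (hη : 0 < η) {Q : BallData} (hQ : Q ∈ 𝒞) : 1 ≤ η := by
  have hr := radius_pos hcov hQ
  have hself : (ballSet Q ∩ ballSet Q).Nonempty :=
    ⟨Q.1, Metric.mem_closedBall_self hr.le, Metric.mem_closedBall_self hr.le⟩
  have h := hcov.comparable_ub Q hQ Q hQ hself
  have hvol : (0:ℝ) < ballVol Q ^ ((1:ℝ)/3) := by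
    rw [vol_cbrt hr.le]; positivity
  rwa [div_self hvol.ne'] at h

lemma radius_comp {B B' : BallData} (hB : B ∈ 𝒞) (hB' : B' ∈ 𝒞)
    (hint : (ballSet B ∩ ballSet B').Nonempty) : B.2 ≤ η * B'.2 := by
  have hr := radius_pos hcov hB
  have hr' := radius_pos hcov hB'
  have h := hcov.comparable_ub B hB B' hB' hint
  rw [vol_cbrt hr.le, vol_cbrt hr'.le] at h
  have hκ : (0:ℝ) < (4 * Real.pi / 3) ^ ((1:ℝ)/3) := by positivity
  rw [div_le_iff₀ (by positivity)] at h
  nlinarith [h, hκ]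

end

lemma subset_layer_succ {𝒞 : Set BallData} {Q B : BallData} {n : ℕ} (hB : B ∈ 𝒞)
    (hne : (ballSet B ∩ layerU 𝒞 Q n).Nonempty) : ballSet B ⊆ layerU 𝒞 Q (n+1) := by
  intro x hx
  show x ∈ ⋃ B' ∈ {B' | B' ∈ 𝒞 ∧ (ballSet B' ∩ layerU 𝒞 Q n).Nonempty}, ballSet B'
  exact Set.mem_biUnion ⟨hB, hne⟩ hx

lemma self_subset_layer1 {σ η : ℝ} {𝒞 : Set BallData} (hcov : IsCover σ η 𝒞)
    {Q : BallData} (hQ : Q ∈ 𝒞) : ballSet Q ⊆ layerU 𝒞 Q 1 :=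
  subset_layer_succ hQ ⟨Q.1, Metric.mem_closedBall_self (radius_pos hcov hQ).le,
    Metric.mem_closedBall_self (radius_pos hcov hQ).le⟩

lemma layer1_subset_layer2 {𝒞 : Set BallData} {Q : BallData} :
    layerU 𝒞 Q 1 ⊆ layerU 𝒞 Q 2 := by
  intro x hx
  have hx' := hx
  rw [show (1:ℕ) = 0 + 1 from rfl, layerU] at hx'
  rcases Set.mem_iUnion₂.1 hx' with ⟨B, ⟨hB, _⟩, hxB⟩
  exact subset_layer_succ hB ⟨x, hxB, hx⟩ hxB

lemma P1_finite {σ η : ℝ} {𝒞 : Set BallData} (hcov : IsCover σ η 𝒞)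
    {Q : BallData} (hQ : Q ∈ 𝒞) :
    {B | B ∈ 𝒞 ∧ (ballSet B ∩ ballSet Q).Nonempty}.Finite := by
  apply ((hcov.overlap_finite Q hQ).insert Q).subset
  rintro B ⟨hB, hne⟩
  rcases eq_or_ne B Q with rfl | hBQ
  · exact Set.mem_insert _ _
  · exact Set.mem_insert_of_mem _ ⟨hB, hBQ, hne.imp fun x ⟨a, b⟩ => ⟨b, a⟩⟩

lemma layer1_closed {σ η : ℝ} {𝒞 : Set BallData} (hcov : IsCover σ η 𝒞)
    {Q : BallData} (hQ : Q ∈ 𝒞) : IsClosed (layerU 𝒞 Q 1) := by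
  rw [show (1:ℕ) = 0 + 1 from rfl, layerU]
  exact (P1_finite hcov hQ).isClosed_biUnion fun B _ => Metric.isClosed_closedBall

end PVC

namespace PVC
section
variable {σ η : ℝ} {𝒞 : Set BallData} (hcov : IsCover σ η 𝒞)
include hcov

lemma mult_bound (hσ : 0 < σ) (x : E3) :
    {B | B ∈ 𝒞 ∧ x ∈ ballSet B}.Finite ∧
      {B | B ∈ 𝒞 ∧ x ∈ ballSet B}.ncard ≤ ⌊σ⌋₊ + 1 := by
  obtain ⟨B₀, hB₀, hx₀⟩ := hcov.covers x
  have hsub : {B | B ∈ 𝒞 ∧ x ∈ ballSet B} ⊆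
      insert B₀ {B' | B' ∈ 𝒞 ∧ B' ≠ B₀ ∧ (ballSet B₀ ∩ ballSet B').Nonempty} := by
    rintro B ⟨hB, hxB⟩
    rcases eq_or_ne B B₀ with rfl | hne
    · exact Set.mem_insert _ _
    · exact Set.mem_insert_of_mem _ ⟨hB, hne, ⟨x, hx₀, hxB⟩⟩
  have hfin : (insert B₀ {B' | B' ∈ 𝒞 ∧ B' ≠ B₀ ∧ (ballSet B₀ ∩ ballSet B').Nonempty}).Finite :=
    (hcov.overlap_finite B₀ hB₀).insert B₀
  refine ⟨hfin.subset hsub, ?_⟩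
  calc {B | B ∈ 𝒞 ∧ x ∈ ballSet B}.ncard
      ≤ (insert B₀ {B' | B' ∈ 𝒞 ∧ B' ≠ B₀ ∧ (ballSet B₀ ∩ ballSet B').Nonempty}).ncard :=
        Set.ncard_le_ncard hsub hfin
    _ ≤ {B' | B' ∈ 𝒞 ∧ B' ≠ B₀ ∧ (ballSet B₀ ∩ ballSet B').Nonempty}.ncard + 1 :=
        Set.ncard_insert_le _ _
    _ ≤ ⌊σ⌋₊ + 1 := by
        have := hcov.overlap_card B₀ hB₀
        have : {B' | B' ∈ 𝒞 ∧ B' ≠ B₀ ∧ (ballSet B₀ ∩ ballSet B').Nonempty}.ncard ≤ ⌊σ⌋₊ :=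
          Nat.le_floor this
        omega

lemma locally_finite (hσ : 0 < σ) (z : E3) (R : ℝ) (hR : 0 ≤ R) :
    {B | B ∈ 𝒞 ∧ (ballSet B ∩ Metric.closedBall z R).Nonempty}.Finite := by
  set S := {B | B ∈ 𝒞 ∧ (ballSet B ∩ Metric.closedBall z R).Nonempty} with hS
  by_contra hinf
  have hinf : S.Infinite := hinf
  set m : ℕ := ⌊σ⌋₊ + 1 with hm
  -- construct inner unit balls
  have hsmall : ∀ B ∈ S, ∃ c : E3, Metric.closedBall c 1 ⊆ ballSet B ∧
      Metric.closedBall c 1 ⊆ Metric.closedBall z (R + 2) := by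
    rintro B ⟨hB, w, hwB, hwz⟩
    have hr1 : (1:ℝ) ≤ B.2 := hcov.radius_ge_one B hB
    have hwB' : dist w B.1 ≤ B.2 := hwB
    have hwz' : dist w z ≤ R := hwz
    rcases le_or_gt (dist w B.1) 1 with hd | hd
    · refine ⟨B.1, Metric.closedBall_subset_closedBall hr1, ?_⟩
      intro y hy
      have hy' : dist y B.1 ≤ 1 := hy
      have : dist y z ≤ dist y B.1 + dist B.1 w + dist w z := dist_triangle4 y B.1 w z
      rw [Metric.mem_closedBall]
      rw [dist_comm] at hd
      linarith
    · set d := dist w B.1 with hdd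
      have hd0 : 0 < d := lt_trans one_pos hd
      refine ⟨w + d⁻¹ • (B.1 - w), ?_, ?_⟩
      · intro y hy
        have hy' : dist y (w + d⁻¹ • (B.1 - w)) ≤ 1 := hy
        have hcB : dist (w + d⁻¹ • (B.1 - w)) B.1 = d - 1 := by
          rw [dist_eq_norm]
          have : w + d⁻¹ • (B.1 - w) - B.1 = (d⁻¹ - 1) • (B.1 - w) := by
            rw [sub_smul, one_smul]; abel
          have hinv : d⁻¹ ≤ 1 := by
            rw [← one_div]; exact div_le_one_of_le₀ hd.le hd0.le
          rw [this, norm_smul, Real.norm_eq_abs, abs_of_nonpos (by linarith)]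
          have hnorm : ‖B.1 - w‖ = d := by rw [hdd, dist_eq_norm']
          rw [hnorm]
          field_simp
          ring
        have : dist y B.1 ≤ dist y (w + d⁻¹ • (B.1 - w)) + dist (w + d⁻¹ • (B.1 - w)) B.1 :=
          dist_triangle _ _ _
        have hyB : dist y B.1 ≤ d := by rw [hcB] at this; linarith
        exact le_trans hyB hwB'
      · intro y hy
        have hy' : dist y (w + d⁻¹ • (B.1 - w)) ≤ 1 := hy
        have hcw : dist (w + d⁻¹ • (B.1 - w)) w = 1 := by
          rw [dist_eq_norm]
          have : w + d⁻¹ • (B.1 - w) - w = d⁻¹ • (B.1 - w) := by abel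
          rw [this, norm_smul, Real.norm_eq_abs, abs_of_nonneg (by positivity)]
          have hnorm : ‖B.1 - w‖ = d := by rw [hdd, dist_eq_norm']
          rw [hnorm]
          field_simp
        have := dist_triangle4 y (w + d⁻¹ • (B.1 - w)) w z
        rw [Metric.mem_closedBall]
        rw [hcw] at this
        linarith
  choose! c hc1 hc2 using hsmall
  -- choose a large finite subset
  set v₀ : ℝ≥0∞ := volume (Metric.closedBall (0:E3) 1) with hv₀
  have hv₀pos : 0 < v₀ := measure_closedBall_pos volume 0 one_pos
  have hv₀top : v₀ ≠ ⊤ := measure_closedBall_lt_top.ne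
  have hWtop : volume (Metric.closedBall z (R + 2)) ≠ ⊤ := measure_closedBall_lt_top.ne
  have hxtop : (m : ℝ≥0∞) * volume (Metric.closedBall z (R + 2)) / v₀ ≠ ⊤ := by
    apply ENNReal.mul_ne_top (ENNReal.mul_ne_top (ENNReal.natCast_ne_top m) hWtop)
    exact ENNReal.inv_ne_top.mpr hv₀pos.ne'
  obtain ⟨K, hK⟩ := ENNReal.exists_nat_gt hxtop
  obtain ⟨F, hFsub, hFcard⟩ := hinf.exists_subset_card_eq K
  -- counting
  have key : (K : ℝ≥0∞) * v₀ ≤ (m : ℝ≥0∞) * volume (Metric.closedBall z (R + 2)) := by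
    have h1 : ∀ B ∈ F, volume (Metric.closedBall (c B) 1) = v₀ := by
      intro B _
      rw [hv₀]
      exact MeasureTheory.Measure.addHaar_closedBall_center volume (c B) 1
    calc (K : ℝ≥0∞) * v₀ = ∑ B ∈ F, volume (Metric.closedBall (c B) 1) := by
          rw [Finset.sum_congr rfl h1, Finset.sum_const, hFcard, nsmul_eq_mul]
      _ = ∑ B ∈ F, ∫⁻ x, (Metric.closedBall (c B) 1).indicator 1 x := by
          refine Finset.sum_congr rfl fun B _ => ?_
          rw [lintegral_indicator_one measurableSet_closedBall]
      _ = ∫⁻ x, ∑ B ∈ F, (Metric.closedBall (c B) 1).indicator 1 x := by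
          rw [MeasureTheory.lintegral_finset_sum' F]
          intro B _
          exact (measurable_one.indicator measurableSet_closedBall).aemeasurable
      _ ≤ ∫⁻ x, (Metric.closedBall z (R + 2)).indicator (fun _ => (m : ℝ≥0∞)) x := by
          apply lintegral_mono
          intro x
          show ∑ B ∈ F, (Metric.closedBall (c B) 1).indicator 1 x
              ≤ (Metric.closedBall z (R + 2)).indicator (fun _ => (m : ℝ≥0∞)) x
          by_cases hxW : x ∈ Metric.closedBall z (R + 2)
          · rw [Set.indicator_of_mem hxW]
            classical
            have hcount : ((F.filter (fun B => x ∈ Metric.closedBall (c B) 1)).card : ℝ≥0∞)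
                = ∑ B ∈ F, (Metric.closedBall (c B) 1).indicator 1 x := by
              rw [Finset.card_filter, Nat.cast_sum]
              refine Finset.sum_congr rfl fun B _ => ?_
              by_cases h : x ∈ Metric.closedBall (c B) 1 <;> simp [h, Set.indicator_apply]
            rw [show (∑ B ∈ F, (Metric.closedBall (c B) 1).indicator 1 x) = _ from hcount.symm]
            have hsub2 : ↑(F.filter (fun B => x ∈ Metric.closedBall (c B) 1)) ⊆
                {B | B ∈ 𝒞 ∧ x ∈ ballSet B} := by
              intro B hB
              rw [Finset.coe_filter] at hB
              obtain ⟨hBF, hxB⟩ := hB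
              have hBS : B ∈ S := hFsub hBF
              exact ⟨hBS.1, hc1 B hBS hxB⟩
            have hcard : (F.filter (fun B => x ∈ Metric.closedBall (c B) 1)).card ≤ m := by
              rw [← Set.ncard_coe_finset]
              calc _ ≤ {B | B ∈ 𝒞 ∧ x ∈ ballSet B}.ncard :=
                    Set.ncard_le_ncard hsub2 (mult_bound hcov hσ x).1
                _ ≤ m := (mult_bound hcov hσ x).2
            exact_mod_cast Nat.cast_le.mpr hcard
          · rw [Set.indicator_of_notMem hxW]
            apply le_of_eq
            refine Finset.sum_eq_zero fun B hBF => ?_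
            rw [Set.indicator_of_notMem]
            intro hxB
            exact hxW (hc2 B (hFsub hBF) hxB)
      _ = (m : ℝ≥0∞) * volume (Metric.closedBall z (R + 2)) := by
          rw [lintegral_indicator measurableSet_closedBall, setLIntegral_const]
  have : (K : ℝ≥0∞) ≤ (m : ℝ≥0∞) * volume (Metric.closedBall z (R + 2)) / v₀ :=
    (ENNReal.le_div_iff_mul_le (Or.inl hv₀pos.ne') (Or.inl hv₀top)).mpr key
  exact absurd this (not_le.mpr hK)

end
end PVC

namespace PVC
section
variable {σ η : ℝ} {𝒞 : Set BallData} (hcov : IsCover σ η 𝒞)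
include hcov

lemma layerU_zero {Q : BallData} : layerU 𝒞 Q 0 = ballSet Q := rfl

lemma core (hσ : 0 < σ) (hη : 0 < η) {Q Q' : BallData} (hQ : Q ∈ 𝒞) (hQ' : Q' ∈ 𝒞)
    (hdisj : ballSet Q' ∩ layerU 𝒞 Q 2 = ∅) :
    ∃ B₂ ∈ 𝒞, ∃ t : ℝ, 0 < t ∧ t < dist Q.1 Q'.1 ∧
      dist (Q.1 + (t / dist Q.1 Q'.1) • (Q'.1 - Q.1)) B₂.1 ≤ B₂.2 ∧
      ballSet B₂ ∩ ballSet Q = ∅ ∧ ballSet B₂ ∩ ballSet Q' = ∅ ∧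
      Q.2 / η ^ 2 ≤ B₂.2 := by
  have hr : 0 < Q.2 := radius_pos hcov hQ
  have hr' : 0 < Q'.2 := radius_pos hcov hQ'
  set D := dist Q.1 Q'.1 with hDdef
  -- Q and Q' are disjoint
  have hQQ' : ballSet Q' ∩ ballSet Q = ∅ := by
    apply Set.subset_empty_iff.mp
    rw [← hdisj]
    exact Set.inter_subset_inter_right _
      ((self_subset_layer1 hcov hQ).trans layer1_subset_layer2)
  have hrrD : Q'.2 + Q.2 < dist Q'.1 Q.1 := dist_of_disjoint hr'.le hr.le hQQ'
  have hDrr : Q.2 + Q'.2 < D := by rw [hDdef, dist_comm]; linarith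
  have hD0 : 0 < D := by linarith
  set v : E3 := Q'.1 - Q.1 with hvdef
  have hvnorm : ‖v‖ = D := by rw [hvdef, hDdef, dist_eq_norm']
  set p : ℝ → E3 := fun t => Q.1 + (t / D) • v with hpdef
  have hdistp : ∀ s t : ℝ, dist (p s) (p t) = |s - t| := by
    intro s t
    rw [dist_eq_norm]
    have : p s - p t = ((s - t) / D) • v := by
      simp only [hpdef]
      rw [sub_div, sub_smul]
      abel
    rw [this, norm_smul, Real.norm_eq_abs, hvnorm, abs_div, abs_of_pos hD0]
    field_simp
  have hpQ : ∀ t : ℝ, 0 ≤ t → dist (p t) Q.1 = t := by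
    intro t ht
    have hp0 : p 0 = Q.1 := by simp [hpdef]
    rw [← hp0, hdistp]; rw [sub_zero, abs_of_nonneg ht]
  have hpQ' : ∀ t : ℝ, t ≤ D → dist (p t) Q'.1 = D - t := by
    intro t ht
    have hpD : p D = Q'.1 := by
      simp only [hpdef]
      rw [div_self hD0.ne', one_smul, hvdef]; abel
    rw [← hpD, hdistp, abs_of_nonpos (by linarith), neg_sub]
  have hpcont : Continuous p := by
    apply continuous_const.add
    exact (continuous_id.div_const D).smul continuous_const
  set Sset : Set ℝ := {t | t ∈ Set.Icc (0:ℝ) D ∧ p t ∈ layerU 𝒞 Q 1} with hSsetdef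
  have hSclosed : IsClosed Sset := by
    have : Sset = Set.Icc (0:ℝ) D ∩ p ⁻¹' (layerU 𝒞 Q 1) := rfl
    rw [this]
    exact isClosed_Icc.inter ((layer1_closed hcov hQ).preimage hpcont)
  have hSne : Sset.Nonempty := by
    refine ⟨0, ⟨Set.mem_Icc.mpr ⟨le_refl 0, hD0.le⟩, ?_⟩⟩
    have hp0 : p 0 = Q.1 := by simp [hpdef]
    rw [hp0]
    exact self_subset_layer1 hcov hQ (Metric.mem_closedBall_self hr.le)
  have hSbdd : BddAbove Sset := (bddAbove_Icc (a := (0:ℝ)) (b := D)).mono fun t ht => ht.1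
  set t₁ := sSup Sset with ht₁def
  have ht₁mem : t₁ ∈ Sset := hSclosed.csSup_mem hSne hSbdd
  obtain ⟨⟨ht₁0, ht₁D⟩, hpt₁⟩ := ht₁mem
  have hrt₁ : Q.2 ≤ t₁ := by
    apply le_csSup hSbdd
    refine ⟨Set.mem_Icc.mpr ⟨hr.le, by linarith⟩, ?_⟩
    have : p Q.2 ∈ ballSet Q := by
      rw [ballSet, Metric.mem_closedBall, hpQ Q.2 hr.le]
    exact self_subset_layer1 hcov hQ this
  have ht₁ub : ∀ t : ℝ, t₁ < t → t ≤ D → p t ∉ layerU 𝒞 Q 1 := by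
    intro t htlt htD hmem
    have : t ∈ Sset := ⟨Set.mem_Icc.mpr ⟨by linarith, htD⟩, hmem⟩
    exact absurd (le_csSup hSbdd this) (not_le.mpr htlt)
  -- the sup point is away from Q'
  have ht₁Q' : Q'.2 < D - t₁ := by
    have hnot : p t₁ ∉ ballSet Q' := by
      intro hmem
      have : p t₁ ∈ ballSet Q' ∩ layerU 𝒞 Q 2 := ⟨hmem, layer1_subset_layer2 hpt₁⟩
      rw [hdisj] at this; exact this
    have : ¬ (dist (p t₁) Q'.1 ≤ Q'.2) := hnot
    rw [hpQ' t₁ ht₁D] at this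
    linarith
  set δ := D - Q'.2 - t₁ with hδdef
  have hδ : 0 < δ := by linarith
  have hδD : δ ≤ D := by linarith
  set tn : ℕ → ℝ := fun n => t₁ + δ / (n + 1) with htndef
  have htn1 : ∀ n : ℕ, t₁ < tn n := by
    intro n
    have : 0 < δ / (n + 1 : ℝ) := by positivity
    simp only [htndef]; linarith
  have htn2 : ∀ n : ℕ, tn n ≤ D - Q'.2 := by
    intro n
    have h1 : δ / (n + 1 : ℝ) ≤ δ := by
      apply div_le_self hδ.le
      have : (0:ℝ) ≤ n := Nat.cast_nonneg n
      linarith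
    simp only [htndef]; linarith
  have hch : ∀ n : ℕ, ∃ B, B ∈ 𝒞 ∧ p (tn n) ∈ ballSet B := by
    intro n
    obtain ⟨B, hB, hmem⟩ := hcov.covers (p (tn n))
    exact ⟨B, hB, hmem⟩
  choose Bn hBn1 hBn2 using hch
  set Sfin := {B | B ∈ 𝒞 ∧ (ballSet B ∩ Metric.closedBall (p t₁) D).Nonempty} with hSfindef
  have hSfin : Sfin.Finite := locally_finite hcov hσ (p t₁) D hD0.le
  have hBnS : ∀ n : ℕ, Bn n ∈ Sfin := by
    intro n
    refine ⟨hBn1 n, ⟨p (tn n), hBn2 n, ?_⟩⟩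
    rw [Metric.mem_closedBall, hdistp]
    have h1 : 0 < δ / (n + 1 : ℝ) := by positivity
    have h2 : δ / (n + 1 : ℝ) ≤ δ := by
      apply div_le_self hδ.le
      have : (0:ℝ) ≤ n := Nat.cast_nonneg n
      linarith
    rw [abs_of_pos (by simp only [htndef]; linarith)]
    simp only [htndef]
    linarith
  have : Finite ↥Sfin := hSfin.to_subtype
  obtain ⟨b, hb⟩ := Finite.exists_infinite_fiber (fun n : ℕ => (⟨Bn n, hBnS n⟩ : ↥Sfin))
  set N := (fun n : ℕ => (⟨Bn n, hBnS n⟩ : ↥Sfin)) ⁻¹' {b} with hNdef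
  have hNinf : N.Infinite := Set.infinite_coe_iff.mp hb
  set B₂ := (b : BallData) with hB₂def
  have hB₂𝒞 : B₂ ∈ 𝒞 := b.2.1
  have hBn_eq : ∀ n ∈ N, Bn n = B₂ := by
    intro n hn
    have : (⟨Bn n, hBnS n⟩ : ↥Sfin) = b := hn
    exact congrArg Subtype.val this
  -- p t₁ ∈ B₂
  have hpt₁B₂ : dist (p t₁) B₂.1 ≤ B₂.2 := by
    apply le_of_forall_pos_le_add
    intro ε hε
    obtain ⟨n, hnN, hngt⟩ := hNinf.exists_gt ⌈δ / ε⌉₊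
    have hn1 : δ / ε ≤ (n : ℝ) := le_trans (Nat.le_ceil _) (by exact_mod_cast hngt.le)
    have hεn : δ / (n + 1 : ℝ) ≤ ε := by
      rw [div_le_iff₀ (by positivity)]
      rw [div_le_iff₀ hε] at hn1
      have : (0:ℝ) < ε := hε
      nlinarith
    have htri : dist (p t₁) B₂.1 ≤ dist (p t₁) (p (tn n)) + dist (p (tn n)) B₂.1 :=
      dist_triangle _ _ _
    have hd1 : dist (p t₁) (p (tn n)) = δ / (n + 1 : ℝ) := by
      rw [hdistp]
      have hpos : (0:ℝ) < δ / (↑n + 1) := by positivity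
      rw [abs_of_nonpos (by simp only [htndef]; linarith)]
      simp only [htndef]; ring
    have hd2 : dist (p (tn n)) B₂.1 ≤ B₂.2 := by
      have := hBn2 n
      rw [hBn_eq n hnN] at this
      exact this
    rw [hd1] at htri
    linarith
  -- choose the witness point
  obtain ⟨n₀, hn₀⟩ := hNinf.nonempty
  set t := tn n₀ with htdef
  have htt₁ : t₁ < t := htn1 n₀
  have htD : t ≤ D - Q'.2 := htn2 n₀
  have ht0 : 0 < t := by linarith [hrt₁, hr]
  have htltD : t < D := by linarith
  have hptB₂ : dist (p t) B₂.1 ≤ B₂.2 := by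
    have := hBn2 n₀
    rw [hBn_eq n₀ hn₀] at this
    exact this
  -- B₂ disjoint from Q
  have hdisjQ : ballSet B₂ ∩ ballSet Q = ∅ := by
    rw [Set.eq_empty_iff_forall_notMem]
    rintro x ⟨hxB₂, hxQ⟩
    have hsub : ballSet B₂ ⊆ layerU 𝒞 Q 1 := by
      apply subset_layer_succ hB₂𝒞
      rw [layerU_zero hcov]
      exact ⟨x, hxB₂, hxQ⟩
    exact ht₁ub t htt₁ (by linarith) (hsub hptB₂)
  -- B₂ ⊆ layer 2, so disjoint from Q'
  have hB₂layer2 : ballSet B₂ ⊆ layerU 𝒞 Q 2 :=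
    subset_layer_succ hB₂𝒞 ⟨p t₁, hpt₁B₂, hpt₁⟩
  have hdisjQ' : ballSet B₂ ∩ ballSet Q' = ∅ := by
    rw [Set.eq_empty_iff_forall_notMem]
    rintro x ⟨hxB₂, hxQ'⟩
    have : x ∈ ballSet Q' ∩ layerU 𝒞 Q 2 := ⟨hxQ', hB₂layer2 hxB₂⟩
    rw [hdisj] at this; exact this
  -- radius lower bound
  have hrad : Q.2 / η ^ 2 ≤ B₂.2 := by
    have hpt₁' := hpt₁
    rw [show (1:ℕ) = 0 + 1 from rfl, layerU] at hpt₁'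
    rcases Set.mem_iUnion₂.1 hpt₁' with ⟨B₁, ⟨hB₁𝒞, hB₁Q⟩, hxB₁⟩
    have h1 : Q.2 ≤ η * B₁.2 := by
      apply radius_comp hcov hQ hB₁𝒞
      exact hB₁Q.imp fun y ⟨a, b⟩ => ⟨b, a⟩
    have h2 : B₁.2 ≤ η * B₂.2 := radius_comp hcov hB₁𝒞 hB₂𝒞 ⟨p t₁, hxB₁, hpt₁B₂⟩
    rw [div_le_iff₀ (by positivity)]
    nlinarith
  exact ⟨B₂, hB₂𝒞, t, ht0, htltD, hptB₂, hdisjQ, hdisjQ', hrad⟩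

end
end PVC

namespace PVC

set_option maxHeartbeats 1000000 in
/-- Pure real-algebra part of the key estimate. -/
lemma keyD_alg {r r' r₂ t Y s η : ℝ} (hη : 0 < η)
    (hr : 0 < r) (hr' : 0 < r') (hr₂ : 0 < r₂) (ht0 : 0 < t) (hY0 : 0 < Y)
    (hsq1 : (r₂ + r) ^ 2 < r₂ ^ 2 + 2 * (t / (t + Y) * s) + t ^ 2)
    (hsq2 : (r₂ + r') ^ 2 < r₂ ^ 2 - 2 * (Y / (t + Y) * s) + Y ^ 2)
    (hra : r / η ^ 2 ≤ r₂) (hrb : r' / η ^ 2 ≤ r₂) :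
    (r + r') * Real.sqrt (1 + 2 / η ^ 2) ≤ t + Y := by
  have hD0 : 0 < t + Y := by linarith
  have hD' : t + Y ≠ 0 := hD0.ne'
  set sa := Real.sqrt (r ^ 2 + 2 * r₂ * r) with hsadef
  set sb := Real.sqrt (r' ^ 2 + 2 * r₂ * r') with hsbdef
  have hsa2 : sa ^ 2 = r ^ 2 + 2 * r₂ * r := Real.sq_sqrt (by positivity)
  have hsb2 : sb ^ 2 = r' ^ 2 + 2 * r₂ * r' := Real.sq_sqrt (by positivity)
  have hsa0 : 0 ≤ sa := Real.sqrt_nonneg _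
  have hsb0 : 0 ≤ sb := Real.sqrt_nonneg _
  have hAB : sa ^ 2 * Y + sb ^ 2 * t < t * Y * (t + Y) := by
    rw [hsa2, hsb2]
    have h1 : 2 * r₂ * r + r ^ 2 - t ^ 2 < 2 * (t / (t + Y) * s) := by linarith
    have h2 : 2 * r₂ * r' + r' ^ 2 - Y ^ 2 < -(2 * (Y / (t + Y) * s)) := by linarith
    have h1' := mul_lt_mul_of_pos_right h1 hY0
    have h2' := mul_lt_mul_of_pos_right h2 ht0
    have hzero : (2 * (t / (t + Y) * s)) * Y + (-(2 * (Y / (t + Y) * s))) * t = 0 := by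
      field_simp
      ring
    nlinarith [h1', h2', hzero]
  have hsum : sa + sb ≤ t + Y := by
    have e1 : (sa + sb) ^ 2 * (t * Y) ≤ (sa ^ 2 * Y + sb ^ 2 * t) * (t + Y) := by
      nlinarith [sq_nonneg (sa * Y - sb * t)]
    have e2 : (sa ^ 2 * Y + sb ^ 2 * t) * (t + Y) < (t * Y * (t + Y)) * (t + Y) :=
      mul_lt_mul_of_pos_right hAB hD0
    have h2 : (sa + sb) ^ 2 * (t * Y) < (t + Y) ^ 2 * (t * Y) := by nlinarith [e1, e2]
    have h3 : (sa + sb) ^ 2 < (t + Y) ^ 2 := lt_of_mul_lt_mul_right h2 (by positivity)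
    exact (lt_of_pow_lt_pow_left₀ 2 hD0.le h3).le
  have hsaK : r * Real.sqrt (1 + 2 / η ^ 2) ≤ sa := by
    have h1 : r ^ 2 / η ^ 2 ≤ r₂ * r := by
      calc r ^ 2 / η ^ 2 = (r / η ^ 2) * r := by ring
        _ ≤ r₂ * r := mul_le_mul_of_nonneg_right hra hr.le
    have h2 : r ^ 2 * (1 + 2 / η ^ 2) ≤ r ^ 2 + 2 * r₂ * r := by
      have e : r ^ 2 * (1 + 2 / η ^ 2) = r ^ 2 + 2 * (r ^ 2 / η ^ 2) := by ring
      linarith [e.le, e.ge]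
    rw [show r * Real.sqrt (1 + 2 / η ^ 2) = Real.sqrt (r ^ 2 * (1 + 2 / η ^ 2)) from by
      rw [Real.sqrt_mul (sq_nonneg r), Real.sqrt_sq hr.le]]
    exact Real.sqrt_le_sqrt h2
  have hsbK : r' * Real.sqrt (1 + 2 / η ^ 2) ≤ sb := by
    have h1 : r' ^ 2 / η ^ 2 ≤ r₂ * r' := by
      calc r' ^ 2 / η ^ 2 = (r' / η ^ 2) * r' := by ring
        _ ≤ r₂ * r' := mul_le_mul_of_nonneg_right hrb hr'.le
    have h2 : r' ^ 2 * (1 + 2 / η ^ 2) ≤ r' ^ 2 + 2 * r₂ * r' := by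
      have e : r' ^ 2 * (1 + 2 / η ^ 2) = r' ^ 2 + 2 * (r' ^ 2 / η ^ 2) := by ring
      linarith [e.le, e.ge]
    rw [show r' * Real.sqrt (1 + 2 / η ^ 2) = Real.sqrt (r' ^ 2 * (1 + 2 / η ^ 2)) from by
      rw [Real.sqrt_mul (sq_nonneg r'), Real.sqrt_sq hr'.le]]
    exact Real.sqrt_le_sqrt h2
  calc (r + r') * Real.sqrt (1 + 2 / η ^ 2)
      = r * Real.sqrt (1 + 2 / η ^ 2) + r' * Real.sqrt (1 + 2 / η ^ 2) := by ring
    _ ≤ sa + sb := add_le_add hsaK hsbK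
    _ ≤ t + Y := hsum

set_option maxHeartbeats 1000000 in
lemma keyD {η : ℝ} (hη : 0 < η) {xq xq' c₂ : E3} {r r' r₂ t : ℝ}
    (hr : 0 < r) (hr' : 0 < r') (hr₂ : 0 < r₂)
    (ht0 : 0 < t) (htD : t < dist xq xq')
    (hp : dist (xq + (t / dist xq xq') • (xq' - xq)) c₂ ≤ r₂)
    (hC2 : r₂ + r < dist c₂ xq) (hC3 : r₂ + r' < dist c₂ xq')
    (hra : r / η ^ 2 ≤ r₂) (hrb : r' / η ^ 2 ≤ r₂) :
    (r + r') * Real.sqrt (1 + 2 / η ^ 2) ≤ dist xq xq' := by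
  have hD0 : 0 < dist xq xq' := lt_trans ht0 htD
  have hvnorm : ‖xq' - xq‖ = dist xq xq' := (dist_eq_norm' xq xq').symm
  have hu : ‖c₂ - (xq + (t / dist xq xq') • (xq' - xq))‖ ≤ r₂ := by
    rw [← dist_eq_norm']
    exact hp
  have hu2 : ‖c₂ - (xq + (t / dist xq xq') • (xq' - xq))‖ ^ 2 ≤ r₂ ^ 2 :=
    pow_le_pow_left₀ (norm_nonneg _) hu 2
  obtain ⟨s, hs⟩ : ∃ x : ℝ,
      (inner ℝ (c₂ - (xq + (t / dist xq xq') • (xq' - xq))) (xq' - xq) : ℝ) = x := ⟨_, rfl⟩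
  -- first constraint
  have hsq1 : (r₂ + r) ^ 2 < r₂ ^ 2 + 2 * (t / dist xq xq' * s) + t ^ 2 := by
    have h := pow_lt_pow_left₀ hC2 (by positivity) (two_ne_zero)
    have hx1 : c₂ - xq
        = (c₂ - (xq + (t / dist xq xq') • (xq' - xq))) + (t / dist xq xq') • (xq' - xq) := by
      abel
    rw [dist_eq_norm, hx1, norm_add_sq_real, real_inner_smul_right, hs] at h
    have hnv : ‖(t / dist xq xq') • (xq' - xq)‖ ^ 2 = t ^ 2 := by
      rw [norm_smul, Real.norm_eq_abs, hvnorm, abs_div, abs_of_pos ht0, abs_of_pos hD0]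
      field_simp
    rw [hnv] at h
    nlinarith [h, hu2]
  -- second constraint
  have hsq2 : (r₂ + r') ^ 2
      < r₂ ^ 2 - 2 * ((dist xq xq' - t) / dist xq xq' * s) + (dist xq xq' - t) ^ 2 := by
    have h := pow_lt_pow_left₀ hC3 (by positivity) (two_ne_zero)
    have hsub : ((dist xq xq' - t) / dist xq xq') • (xq' - xq)
        = (xq' - xq) - (t / dist xq xq') • (xq' - xq) := by
      rw [sub_div, div_self hD0.ne', sub_smul, one_smul]
    have hx2 : c₂ - xq'
        = (c₂ - (xq + (t / dist xq xq') • (xq' - xq)))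
          - ((dist xq xq' - t) / dist xq xq') • (xq' - xq) := by
      rw [hsub]
      abel
    rw [dist_eq_norm, hx2, norm_sub_sq_real, real_inner_smul_right, hs] at h
    have hnv : ‖((dist xq xq' - t) / dist xq xq') • (xq' - xq)‖ ^ 2 = (dist xq xq' - t) ^ 2 := by
      rw [norm_smul, Real.norm_eq_abs, hvnorm, abs_div, abs_of_pos (by linarith), abs_of_pos hD0]
      field_simp
    rw [hnv] at h
    nlinarith [h, hu2]
  -- apply the algebraic lemma with Y = D - t
  have hD : dist xq xq' = t + (dist xq xq' - t) := by ring
  have := keyD_alg hη hr hr' hr₂ ht0 (by linarith : (0:ℝ) < dist xq xq' - t)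
    (by rw [← hD]; exact hsq1) (by rw [← hD]; exact hsq2) hra hrb
  linarith [this]

end PVC

/-- **Arbitrary points vs. centers** (Lemma 3.4). If `Q, Q' ∈ 𝒞` and `Q' ⊄ Q⁽³⁾`, then for
all `x ∈ Q`, `y ∈ Q'` one has `(1−β)|x_Q − x_{Q'}| ≤ |x−y| ≤ 2|x_Q − x_{Q'}|`, where
`β = (1 + 2/η²)^{-1/2}`. -/
theorem points_vs_centers (σ η : ℝ) (hσ : 0 < σ) (hη : 0 < η)
    (𝒞 : Set BallData) (hcov : IsCover σ η 𝒞)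
    (Q : BallData) (hQ : Q ∈ 𝒞) (Q' : BallData) (hQ' : Q' ∈ 𝒞)
    (hnsub : ¬ ballSet Q' ⊆ layerU 𝒞 Q 3) :
    ∀ x ∈ ballSet Q, ∀ y ∈ ballSet Q',
      (1 - (Real.sqrt (1 + 2 / η ^ 2))⁻¹) * dist Q.1 Q'.1 ≤ dist x y ∧
      dist x y ≤ 2 * dist Q.1 Q'.1 := by
  intro x hx y hy
  have hr : 0 < Q.2 := PVC.radius_pos hcov hQ
  have hr' : 0 < Q'.2 := PVC.radius_pos hcov hQ'
  set K := Real.sqrt (1 + 2 / η ^ 2) with hKdef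
  have hKsq : (1:ℝ) ≤ 1 + 2 / η ^ 2 := le_add_of_nonneg_right (by positivity)
  have hK1 : 1 ≤ K := by
    have := Real.sqrt_le_sqrt hKsq
    rwa [Real.sqrt_one] at this
  have hK0 : 0 < K := lt_of_lt_of_le one_pos hK1
  -- disjointness from the third layer hypothesis
  have hdisj : ballSet Q' ∩ layerU 𝒞 Q 2 = ∅ := by
    rw [Set.eq_empty_iff_forall_notMem]
    rintro z ⟨hz1, hz2⟩
    exact hnsub (PVC.subset_layer_succ hQ' ⟨z, hz1, hz2⟩)
  have hdisj' : ballSet Q ∩ layerU 𝒞 Q' 2 = ∅ := by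
    rw [Set.eq_empty_iff_forall_notMem]
    rintro z ⟨hzQ, hz2⟩
    rw [show (2:ℕ) = 1 + 1 from rfl, layerU] at hz2
    rcases Set.mem_iUnion₂.1 hz2 with ⟨B, ⟨hB𝒞, y₀, hy₀B, hy₀l1⟩, hzB⟩
    rw [show (1:ℕ) = 0 + 1 from rfl, layerU] at hy₀l1
    rcases Set.mem_iUnion₂.1 hy₀l1 with ⟨B'', ⟨hB''𝒞, hB''Q'⟩, hy₀B''⟩
    have hBsub : ballSet B ⊆ layerU 𝒞 Q 1 := PVC.subset_layer_succ hB𝒞 ⟨z, hzB, hzQ⟩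
    have hB''sub : ballSet B'' ⊆ layerU 𝒞 Q 2 :=
      PVC.subset_layer_succ hB''𝒞 ⟨y₀, hy₀B'', hBsub hy₀B⟩
    obtain ⟨w, hwB'', hwQ'⟩ := hB''Q'
    have : w ∈ ballSet Q' ∩ layerU 𝒞 Q 2 := ⟨hwQ', hB''sub hwB''⟩
    rw [hdisj] at this; exact this
  -- main quantitative estimate on center distance
  have hKey : (Q.2 + Q'.2) * K ≤ dist Q.1 Q'.1 := by
    rcases le_total Q'.2 Q.2 with hcase | hcase
    · obtain ⟨B₂, hB₂𝒞, t, ht0, htD, hp, hdQ, hdQ', hrad⟩ :=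
        PVC.core hcov hσ hη hQ hQ' hdisj
      have hrB₂ : 0 < B₂.2 := PVC.radius_pos hcov hB₂𝒞
      have hC2 : B₂.2 + Q.2 < dist B₂.1 Q.1 :=
        PVC.dist_of_disjoint hrB₂.le hr.le hdQ
      have hC3 : B₂.2 + Q'.2 < dist B₂.1 Q'.1 :=
        PVC.dist_of_disjoint hrB₂.le hr'.le hdQ'
      have hrad' : Q'.2 / η ^ 2 ≤ B₂.2 := le_trans (by gcongr) hrad
      exact PVC.keyD hη hr hr' hrB₂ ht0 htD hp hC2 hC3 hrad hrad'
    · obtain ⟨B₂, hB₂𝒞, t, ht0, htD, hp, hdQ', hdQ, hrad⟩ :=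
        PVC.core hcov hσ hη hQ' hQ hdisj'
      have hrB₂ : 0 < B₂.2 := PVC.radius_pos hcov hB₂𝒞
      have hC2 : B₂.2 + Q'.2 < dist B₂.1 Q'.1 :=
        PVC.dist_of_disjoint hrB₂.le hr'.le hdQ'
      have hC3 : B₂.2 + Q.2 < dist B₂.1 Q.1 :=
        PVC.dist_of_disjoint hrB₂.le hr.le hdQ
      have hrad' : Q.2 / η ^ 2 ≤ B₂.2 := le_trans (by gcongr) hrad
      have h := PVC.keyD hη hr' hr hrB₂ ht0 htD hp hC2 hC3 hrad hrad'
      rw [dist_comm Q'.1 Q.1] at h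
      linarith [h]
  have hsum_le : Q.2 + Q'.2 ≤ dist Q.1 Q'.1 := by
    have h1 : Q.2 + Q'.2 ≤ (Q.2 + Q'.2) * K := le_mul_of_one_le_right (by positivity) hK1
    linarith
  constructor
  · -- lower bound
    have h4 := dist_triangle4 Q.1 x y Q'.1
    have h1 : dist Q.1 x ≤ Q.2 := by rw [dist_comm]; exact hx
    have h2 : dist y Q'.1 ≤ Q'.2 := hy
    have hfrac : Q.2 + Q'.2 ≤ dist Q.1 Q'.1 * K⁻¹ := by
      rw [← div_eq_mul_inv, le_div_iff₀ hK0]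
      exact hKey
    have hexp : (1 - K⁻¹) * dist Q.1 Q'.1 = dist Q.1 Q'.1 - dist Q.1 Q'.1 * K⁻¹ := by ring
    rw [hexp]
    linarith
  · -- upper bound
    have h4 := dist_triangle4 x Q.1 Q'.1 y
    have h1 : dist x Q.1 ≤ Q.2 := hx
    have h2 : dist Q'.1 y ≤ Q'.2 := by rw [dist_comm]; exact hy
    linarith

end
end

section
/- Let B ∈ 𝒞, x ∈ B, and y ∈ ℝ³ with y ∉ B^{(3)}. Then |x − y| ≥ ((1−β)/2)·|x_B − y| and |x_B − y| ≥ ((1−β)/2)·|x − y|, where β := (1 + 2/η²)^{−1/2} ∈ (0,1); in particular |x_B − y| and |x − y| are comparable with constants depending only on η. -/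
open MeasureTheory Real Set Metric Filter
open scoped BigOperators ENNReal

noncomputable section

variable {F : Type} [NormedAddCommGroup F] [NormedSpace ℝ F]

section AuxGeom

private lemma arith1 {ρ ρ₁ a α : ℝ} (hρ : 1 ≤ ρ) (hρ₁ : 1 ≤ ρ₁) (ha0 : 0 < a) (ha1 : a ≤ 1/100)
    (hO : 2*ρ₁*(ρ-a) - a^2 ≤ 2*((ρ₁+a)*α)) : ρ*(1 - (21/10)*a) ≤ α := by
  have hmm : (1:ℝ) * 1 ≤ ρ * ρ₁ := mul_le_mul hρ hρ₁ (by norm_num) (by linarith)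
  have e1 : 0 ≤ a * (ρ * ρ₁ - ρ) := mul_nonneg ha0.le (by nlinarith)
  have e2 : 0 ≤ a * (ρ * ρ₁ - ρ₁) := mul_nonneg ha0.le (by nlinarith)
  have e4 : 0 ≤ a * (ρ * ρ₁ / 5 - a) := mul_nonneg ha0.le (by linarith)
  have e5 : 0 ≤ a * a * ρ := by positivity
  have hineq : 2*(ρ₁+a) * (ρ*(1 - (21/10)*a)) ≤ 2*ρ₁*(ρ-a) - a^2 := by nlinarith
  have hc : 0 < 2*(ρ₁+a) := by linarith
  exact le_of_mul_le_mul_left (by nlinarith) hc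

private lemma arith1b {ρ a α : ℝ} (hρ : 1 ≤ ρ) (ha1 : a ≤ 1/100)
    (h : ρ*(1 - (21/10)*a) ≤ α) : ρ * (979/1000) ≤ α := by nlinarith

private lemma arith2 {ρ α x : ℝ} (hρ : 1 ≤ ρ) (hα1 : ρ * (979/1000) ≤ α)
    (hx : x ≤ ρ) (hsq : 0 ≤ x) : x^2 - α^2 ≤ ((21/100)*ρ)^2 := by
  nlinarith [mul_self_le_mul_self hsq hx, mul_self_le_mul_self (by nlinarith : (0:ℝ) ≤ ρ * (979/1000)) hα1]

private lemma arith3 {ρ' β' x : ℝ} (hρ' : 1 ≤ ρ') (hβ1 : ρ' * (19/20) ≤ β')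
    (hx : x ≤ ρ') (hsq : 0 ≤ x) : x^2 - β'^2 ≤ ((32/100)*ρ')^2 := by
  nlinarith [mul_self_le_mul_self hsq hx, mul_self_le_mul_self (by nlinarith : (0:ℝ) ≤ ρ' * (19/20)) hβ1]

private lemma arith5 {ρ ρ' α β' pp : ℝ} (hρ : 1 ≤ ρ) (hρ' : 1 ≤ ρ')
    (hα1 : ρ*(979/1000) ≤ α) (hβ1 : ρ'*(19/20) ≤ β') (hαpos : 0 ≤ α)
    (hPP' : -(((21/100)*ρ) * ((32/100)*ρ')) ≤ pp) : (43/50)*(ρ*ρ') ≤ α*β' + pp := by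
  have p1 : (ρ*(979/1000)) * (ρ'*(19/20)) ≤ α * β' :=
    mul_le_mul hα1 hβ1 (by nlinarith) hαpos
  nlinarith

private lemma arith6 {ρ ρ' nA nA' ip X : ℝ}
    (hA : nA ≤ ρ) (hA' : nA' ≤ ρ') (h0 : 0 ≤ nA) (h0' : 0 ≤ nA')
    (hip : (43/50)*(ρ*ρ') ≤ ip) (hX : X^2 = nA^2 - 2*ip + nA'^2) :
    X^2 ≤ ρ^2 + ρ'^2 - (43/25)*(ρ*ρ') := by
  nlinarith [mul_self_le_mul_self h0 hA, mul_self_le_mul_self h0' hA']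

private lemma arith4 {ρ ρ' X : ℝ} (hρ : 1 ≤ ρ) (hρ' : 1 ≤ ρ')
    (hX : X^2 ≤ ρ^2 + ρ'^2 - (43/25)*(ρ*ρ')) (hX0 : 0 ≤ X) : X ≤ ρ + ρ' - 1/100 := by
  have h1 : (1:ℝ) * 1 ≤ ρ * ρ' := mul_le_mul hρ hρ' (by norm_num) (by linarith)
  have h2 : ρ + ρ' ≤ 2 * (ρ * ρ') := by nlinarith [mul_nonneg (sub_nonneg.mpr hρ) (sub_nonneg.mpr hρ')]
  nlinarith

private lemma le_of_sq_le_sq' {x b : ℝ} (h : x^2 ≤ b^2) (hx : 0 ≤ x) (hb : 0 ≤ b) : x ≤ b := by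
  nlinarith

variable {E : Type*} [NormedAddCommGroup E] [InnerProductSpace ℝ E]

local notation "⟪" x ", " y "⟫" => @inner ℝ _ _ x y

/-- Two closed balls with center distance at most the sum of the radii intersect. -/
lemma balls_meet {c c' : E} {ρ ρ' : ℝ} (hρ : 0 ≤ ρ) (hρ' : 0 ≤ ρ')
    (h : dist c c' ≤ ρ + ρ') : (closedBall c ρ ∩ closedBall c' ρ').Nonempty := by
  by_cases hle : dist c c' ≤ ρ
  · exact ⟨c', by rw [mem_closedBall, dist_comm]; exact hle, mem_closedBall_self hρ'⟩
  · push_neg at hle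
    have hD : 0 < dist c c' := lt_of_le_of_lt hρ hle
    refine ⟨c + (ρ / dist c c') • (c' - c), ?_, ?_⟩
    · rw [mem_closedBall, dist_eq_norm]
      have he : c + (ρ / dist c c') • (c' - c) - c = (ρ / dist c c') • (c' - c) := by abel
      rw [he, norm_smul, Real.norm_eq_abs, abs_of_nonneg (by positivity),
        show ‖c' - c‖ = dist c c' from by rw [dist_eq_norm, norm_sub_rev],
        div_mul_cancel₀ _ (ne_of_gt hD)]
    · rw [mem_closedBall, dist_eq_norm]
      have he : c + (ρ / dist c c') • (c' - c) - c' = (ρ / dist c c' - 1) • (c' - c) := by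
        rw [sub_smul, one_smul]; abel
      rw [he, norm_smul, Real.norm_eq_abs]
      have h1 : ρ / dist c c' - 1 ≤ 0 := by
        rw [sub_nonpos, div_le_one hD]; exact le_of_lt hle
      rw [abs_of_nonpos h1,
        show ‖c' - c‖ = dist c c' from by rw [dist_eq_norm, norm_sub_rev]]
      have he2 : -(ρ / dist c c' - 1) * dist c c' = dist c c' - ρ := by field_simp; ring
      rw [he2]
      linarith

/-- If two closed balls are disjoint, centers are far apart. -/
lemma far_of_disjoint {c c' : E} {ρ ρ' : ℝ} (hρ : 0 ≤ ρ) (hρ' : 0 ≤ ρ')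
    (h : ¬ (closedBall c ρ ∩ closedBall c' ρ').Nonempty) : ρ + ρ' < dist c c' := by
  by_contra hle
  push_neg at hle
  exact h (balls_meet hρ hρ' hle)

lemma lemO {x₀ c z : E} {ρ ρ₀ a : ℝ} (hρ₀ : 0 ≤ ρ₀)
    (hd : ρ + ρ₀ < dist c x₀) (hz : dist z c ≤ ρ) (hza : dist z x₀ = ρ₀ + a) :
    2 * ρ₀ * (ρ - a) - a^2 ≤ 2 * ⟪c - z, z - x₀⟫ := by
  have hρ : 0 ≤ ρ := le_trans dist_nonneg hz
  have key : ‖c - x₀‖^2 = ‖c - z‖^2 + 2*⟪c - z, z - x₀⟫ + ‖z - x₀‖^2 := by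
    have he : c - x₀ = (c - z) + (z - x₀) := by abel
    rw [he, norm_add_sq_real]
  have h1 : ‖c - z‖^2 ≤ ρ^2 := by
    have : ‖c - z‖ ≤ ρ := by rwa [← dist_eq_norm, dist_comm]
    nlinarith [norm_nonneg (c - z)]
  have h2 : ‖z - x₀‖^2 = (ρ₀ + a)^2 := by rw [← dist_eq_norm, hza]
  have h3 : (ρ + ρ₀)^2 ≤ ‖c - x₀‖^2 := by
    rw [← dist_eq_norm]
    nlinarith [dist_nonneg (x := c) (y := x₀)]
  nlinarith

/-- Difference of normalizations. -/
lemma unit_diff {x y : E} (hx : 0 < ‖x‖) (hy : 0 < ‖y‖) :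
    ‖‖x‖⁻¹ • x - ‖y‖⁻¹ • y‖ ≤ 2 * ‖x - y‖ / ‖x‖ := by
  have h1 : ‖x‖⁻¹ • x - ‖y‖⁻¹ • y = ‖x‖⁻¹ • (x - y) + (‖x‖⁻¹ - ‖y‖⁻¹) • y := by
    rw [smul_sub, sub_smul]; abel
  rw [h1]
  have h2 : ‖‖x‖⁻¹ • (x - y)‖ = ‖x - y‖ / ‖x‖ := by
    rw [norm_smul, Real.norm_eq_abs, abs_of_nonneg (by positivity)]; ring
  have h3 : ‖(‖x‖⁻¹ - ‖y‖⁻¹) • y‖ = |‖x‖⁻¹ - ‖y‖⁻¹| * ‖y‖ := by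
    rw [norm_smul, Real.norm_eq_abs]
  have h5 : |‖y‖ - ‖x‖| ≤ ‖x - y‖ := by
    rw [abs_sub_comm]; exact abs_norm_sub_norm_le x y
  have h4 : |‖x‖⁻¹ - ‖y‖⁻¹| * ‖y‖ ≤ ‖x - y‖ / ‖x‖ := by
    have heq : (‖x‖⁻¹ - ‖y‖⁻¹) * ‖y‖ = (‖y‖ - ‖x‖) / ‖x‖ := by field_simp
    have habs : |‖x‖⁻¹ - ‖y‖⁻¹| * ‖y‖ = |‖y‖ - ‖x‖| / ‖x‖ := by
      have : |‖x‖⁻¹ - ‖y‖⁻¹| * ‖y‖ = |(‖x‖⁻¹ - ‖y‖⁻¹) * ‖y‖| := by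
        rw [abs_mul, abs_of_pos hy]
      rw [this, heq, abs_div, abs_of_pos hx]
    rw [habs]
    exact div_le_div_of_nonneg_right h5 hx.le |>.trans le_rfl
  calc ‖‖x‖⁻¹ • (x - y) + (‖x‖⁻¹ - ‖y‖⁻¹) • y‖ ≤ ‖‖x‖⁻¹ • (x - y)‖ + ‖(‖x‖⁻¹ - ‖y‖⁻¹) • y‖ :=
      norm_add_le _ _
  _ ≤ ‖x - y‖ / ‖x‖ + ‖x - y‖ / ‖x‖ := by rw [h2, h3]; linarith
  _ = 2 * ‖x - y‖ / ‖x‖ := by ring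

/-- Reach lemma: points along `u` beyond `z` stay in the ball. -/
lemma reach {z c : E} {u : E} {ρ δ : ℝ} (hu : ‖u‖ = 1) (hδ : 0 ≤ δ)
    (hz : dist z c ≤ ρ) (hinner : δ ≤ 2 * ⟪c - z, u⟫) :
    dist (z + δ • u) c ≤ ρ := by
  have hρ : 0 ≤ ρ := le_trans dist_nonneg hz
  have key : ‖z + δ • u - c‖^2 = ‖z - c‖^2 + 2*δ*⟪z - c, u⟫ + δ^2 := by
    have he : z + δ • u - c = (z - c) + δ • u := by abel
    rw [he, norm_add_sq_real, real_inner_smul_right, norm_smul, Real.norm_eq_abs,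
      abs_of_nonneg hδ, hu]
    ring
  have hflip : ⟪z - c, u⟫ = -⟪c - z, u⟫ := by
    rw [show z - c = -(c - z) from by abel, inner_neg_left]
  have h1 : ‖z - c‖^2 ≤ ρ^2 := by
    have : ‖z - c‖ ≤ ρ := by rwa [← dist_eq_norm]
    nlinarith [norm_nonneg (z - c)]
  have h2 : ‖z + δ • u - c‖^2 ≤ ρ^2 := by
    rw [key, hflip]
    nlinarith
  rw [dist_eq_norm]
  nlinarith [norm_nonneg (z + δ • u - c)]

/-- Two balls squeezed against the same obstacle ball near the same spot intersect. -/
lemma squeezed_balls_meet {c₁ z z' c c' : E} {ρ₁ a a' ρ ρ' : ℝ}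
    (hρ₁ : 1 ≤ ρ₁) (hρ : 1 ≤ ρ) (hρ' : 1 ≤ ρ')
    (ha0 : 0 < a) (ha1 : a ≤ 1/100) (ha0' : 0 < a') (ha1' : a' ≤ 1/100)
    (hz : dist z c₁ = ρ₁ + a) (hz' : dist z' c₁ = ρ₁ + a')
    (hzz' : dist z z' ≤ 1/100)
    (hzc : dist z c ≤ ρ) (hz'c' : dist z' c' ≤ ρ')
    (hsep : ρ + ρ₁ < dist c c₁) (hsep' : ρ' + ρ₁ < dist c' c₁) :
    dist c c' ≤ ρ + ρ' := by
  have hρ₁0 : (0:ℝ) < ρ₁ := lt_of_lt_of_le one_pos hρ₁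
  set v : E := (ρ₁ + a)⁻¹ • (z - c₁) with hv_def
  set v' : E := (ρ₁ + a')⁻¹ • (z' - c₁) with hv'_def
  have hnz : ‖z - c₁‖ = ρ₁ + a := by rw [← dist_eq_norm]; exact hz
  have hnz' : ‖z' - c₁‖ = ρ₁ + a' := by rw [← dist_eq_norm]; exact hz'
  have hpos : (0:ℝ) < ρ₁ + a := by linarith
  have hpos' : (0:ℝ) < ρ₁ + a' := by linarith
  have hvnorm : ‖v‖ = 1 := by
    rw [hv_def, norm_smul, Real.norm_eq_abs, abs_of_pos (by positivity), hnz]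
    field_simp
  have hv'norm : ‖v'‖ = 1 := by
    rw [hv'_def, norm_smul, Real.norm_eq_abs, abs_of_pos (by positivity), hnz']
    field_simp
  set A : E := c - z with hA_def
  set A' : E := c' - z' with hA'_def
  have hnA : ‖A‖ ≤ ρ := by rw [hA_def, ← dist_eq_norm, dist_comm]; exact hzc
  have hnA' : ‖A'‖ ≤ ρ' := by rw [hA'_def, ← dist_eq_norm, dist_comm]; exact hz'c'
  have hO : 2 * ρ₁ * (ρ - a) - a^2 ≤ 2 * ⟪A, z - c₁⟫ :=
    lemO (le_of_lt hρ₁0) hsep hzc hz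
  have hO' : 2 * ρ₁ * (ρ' - a') - a'^2 ≤ 2 * ⟪A', z' - c₁⟫ :=
    lemO (le_of_lt hρ₁0) hsep' hz'c' hz'
  set α : ℝ := ⟪A, v⟫ with hα_def
  set α' : ℝ := ⟪A', v'⟫ with hα'_def
  have hαv : ⟪A, z - c₁⟫ = (ρ₁ + a) * α := by
    rw [hα_def, hv_def, real_inner_smul_right]
    field_simp
  have hα'v : ⟪A', z' - c₁⟫ = (ρ₁ + a') * α' := by
    rw [hα'_def, hv'_def, real_inner_smul_right]
    field_simp
  have hαlb : ρ * (1 - (21/10) * a) ≤ α := by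
    refine arith1 hρ hρ₁ ha0 ha1 ?_
    rw [hαv] at hO; linarith
  have hα'lb : ρ' * (1 - (21/10) * a') ≤ α' := by
    refine arith1 hρ' hρ₁ ha0' ha1' ?_
    rw [hα'v] at hO'; linarith
  have hα1 : ρ * (979/1000) ≤ α := arith1b hρ ha1 hαlb
  have hα'1 : ρ' * (979/1000) ≤ α' := arith1b hρ' ha1' hα'lb
  have hαub : α ≤ ‖A‖ := by
    calc α ≤ ‖A‖ * ‖v‖ := real_inner_le_norm A v
    _ = ‖A‖ := by rw [hvnorm, mul_one]
  have hvv' : ‖v - v'‖ ≤ 1/50 := by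
    have h0 : (0:ℝ) < ‖z - c₁‖ := by rw [hnz]; exact hpos
    have h0' : (0:ℝ) < ‖z' - c₁‖ := by rw [hnz']; exact hpos'
    have hud := unit_diff h0 h0'
    have he : ‖z - c₁‖⁻¹ • (z - c₁) = v := by rw [hv_def, hnz]
    have he' : ‖z' - c₁‖⁻¹ • (z' - c₁) = v' := by rw [hv'_def, hnz']
    rw [he, he'] at hud
    have hd : ‖(z - c₁) - (z' - c₁)‖ = dist z z' := by
      rw [show (z - c₁) - (z' - c₁) = z - z' from by abel, ← dist_eq_norm]
    calc ‖v - v'‖ ≤ 2 * ‖(z - c₁) - (z' - c₁)‖ / ‖z - c₁‖ := hud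
    _ = 2 * dist z z' / (ρ₁ + a) := by rw [hd, hnz]
    _ ≤ 2 * (1/100) / 1 := by
        apply div_le_div₀ (by norm_num) (by linarith) one_pos (by linarith)
    _ = 1/50 := by norm_num
  set β' : ℝ := ⟪A', v⟫ with hβ'_def
  have hβ'lb : ρ' * (19/20) ≤ β' := by
    have hsplit : β' = α' + ⟪A', v - v'⟫ := by
      rw [hβ'_def, hα'_def, ← inner_add_right]
      congr 1
      abel
    have hbd : |⟪A', v - v'⟫| ≤ ρ' * (1/50) := by
      calc |⟪A', v - v'⟫| ≤ ‖A'‖ * ‖v - v'‖ := abs_real_inner_le_norm A' (v - v')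
      _ ≤ ρ' * (1/50) := by
          apply mul_le_mul hnA' hvv' (norm_nonneg _) (by linarith)
    have hbd2 := (abs_le.mp hbd).1
    have : ρ' * (979/1000) - ρ' * (1/50) ≤ β' := by
      rw [hsplit]; linarith
    linarith [mul_le_mul_of_nonneg_left (le_refl (1:ℝ)) (le_of_lt (lt_of_lt_of_le one_pos hρ')), this]
  have hβ'ub : β' ≤ ‖A'‖ := by
    calc β' ≤ ‖A'‖ * ‖v‖ := real_inner_le_norm A' v
    _ = ‖A'‖ := by rw [hvnorm, mul_one]
  have hvv : ⟪v, v⟫ = (1:ℝ) := by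
    rw [real_inner_self_eq_norm_sq, hvnorm]; norm_num
  set P : E := A - α • v with hP_def
  set P' : E := A' - β' • v with hP'_def
  have hPsq : ‖P‖^2 = ‖A‖^2 - α^2 := by
    rw [hP_def, norm_sub_sq_real, real_inner_smul_right, norm_smul, Real.norm_eq_abs, hvnorm]
    rw [← hα_def]
    ring_nf
    rw [sq_abs]
    ring
  have hP'sq : ‖P'‖^2 = ‖A'‖^2 - β'^2 := by
    rw [hP'_def, norm_sub_sq_real, real_inner_smul_right, norm_smul, Real.norm_eq_abs, hvnorm]
    rw [← hβ'_def]
    ring_nf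
    rw [sq_abs]
    ring
  have hαpos : 0 ≤ α := le_trans (by positivity) hα1
  have hβ'pos : 0 ≤ β' := le_trans (by positivity) hβ'lb
  have hPbd : ‖P‖ ≤ (21/100) * ρ := by
    have h1 : ‖P‖^2 ≤ ((21/100)*ρ)^2 := by
      rw [hPsq]; exact arith2 hρ hα1 hnA (norm_nonneg A)
    exact le_of_sq_le_sq' h1 (norm_nonneg P) (by positivity)
  have hP'bd : ‖P'‖ ≤ (32/100) * ρ' := by
    have h1 : ‖P'‖^2 ≤ ((32/100)*ρ')^2 := by
      rw [hP'sq]; exact arith3 hρ' hβ'lb hnA' (norm_nonneg A')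
    exact le_of_sq_le_sq' h1 (norm_nonneg P') (by positivity)
  have hinner : ⟪A, A'⟫ = α * β' + ⟪P, P'⟫ := by
    have hexp : ⟪P, P'⟫ = ⟪A, A'⟫ - α*β' := by
      rw [hP_def, hP'_def]
      simp only [inner_sub_left, inner_sub_right, real_inner_smul_left,
        real_inner_smul_right, hvv]
      have hc' : (inner ℝ v A' : ℝ) = β' := by rw [hβ'_def]; exact real_inner_comm A' v
      rw [hc', ← hα_def]
      ring
    linarith
  have hPP' : -(((21/100)*ρ) * ((32/100)*ρ')) ≤ ⟪P, P'⟫ := by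
    have h1 := (abs_le.mp (abs_real_inner_le_norm P P')).1
    have h2 : ‖P‖ * ‖P'‖ ≤ ((21/100)*ρ) * ((32/100)*ρ') :=
      mul_le_mul hPbd hP'bd (norm_nonneg _) (by positivity)
    linarith
  have hAA'lb : (43/50) * (ρ * ρ') ≤ ⟪A, A'⟫ := by
    rw [hinner]
    exact arith5 hρ hρ' hα1 hβ'lb hαpos hPP'
  have hXsq : ‖A - A'‖^2 = ‖A‖^2 - 2*⟪A, A'⟫ + ‖A'‖^2 := norm_sub_sq_real A A'
  have hfin : ‖A - A'‖^2 ≤ ρ^2 + ρ'^2 - (43/25) * (ρ * ρ') :=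
    arith6 hnA hnA' (norm_nonneg A) (norm_nonneg A') hAA'lb hXsq
  have htarget : ‖A - A'‖ ≤ ρ + ρ' - 1/100 :=
    arith4 hρ hρ' hfin (norm_nonneg _)
  calc dist c c' = ‖(A - A') + (z - z')‖ := by
        rw [dist_eq_norm, hA_def, hA'_def]; congr 1; abel
  _ ≤ ‖A - A'‖ + ‖z - z'‖ := norm_add_le _ _
  _ ≤ (ρ + ρ' - 1/100) + 1/100 := by
      have : ‖z - z'‖ ≤ 1/100 := by rw [← dist_eq_norm]; exact hzz'
      linarith
  _ = ρ + ρ' := by ring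


end AuxGeom

section CoverLemmas

local notation "⟪" x ", " y "⟫" => @inner ℝ _ _ x y

variable {σ η : ℝ} {𝒞 : Set BallData}

lemma mem_layerU_succ {Q : BallData} {x : E3} {n : ℕ} :
    x ∈ layerU 𝒞 Q (n+1) ↔ ∃ W, (W ∈ 𝒞 ∧ (ballSet W ∩ layerU 𝒞 Q n).Nonempty) ∧ x ∈ ballSet W := by
  simp [layerU, Set.mem_iUnion]

lemma ballSet_subset_layerU_succ {Q W : BallData} {n : ℕ}
    (hW : W ∈ 𝒞) (hmeet : (ballSet W ∩ layerU 𝒞 Q n).Nonempty) :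
    ballSet W ⊆ layerU 𝒞 Q (n+1) := by
  intro x hx
  exact mem_layerU_succ.mpr ⟨W, ⟨hW, hmeet⟩, hx⟩

lemma ballSet_nonempty {W : BallData} (hcov : IsCover σ η 𝒞) (hW : W ∈ 𝒞) :
    (ballSet W).Nonempty :=
  ⟨W.1, Metric.mem_closedBall_self (le_trans zero_le_one (hcov.radius_ge_one W hW))⟩

lemma layerU_mono (hcov : IsCover σ η 𝒞) {Q : BallData} (hQ : Q ∈ 𝒞) :
    ∀ n, layerU 𝒞 Q n ⊆ layerU 𝒞 Q (n+1) := by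
  intro n
  induction n with
  | zero =>
    intro x hx
    exact ballSet_subset_layerU_succ hQ (by
      obtain ⟨p, hp⟩ := ballSet_nonempty hcov hQ
      exact ⟨p, hp, hp⟩) hx
  | succ n ih =>
    intro x hx
    obtain ⟨W, ⟨hW, hmeet⟩, hxW⟩ := mem_layerU_succ.mp hx
    exact mem_layerU_succ.mpr ⟨W, ⟨hW, hmeet.mono (Set.inter_subset_inter_right _ ih)⟩, hxW⟩

lemma layerU_le (hcov : IsCover σ η 𝒞) {Q : BallData} (hQ : Q ∈ 𝒞) {m n : ℕ} (h : m ≤ n) :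
    layerU 𝒞 Q m ⊆ layerU 𝒞 Q n := by
  induction n with
  | zero => simp_all
  | succ n ih =>
    rcases Nat.lt_or_ge m (n+1) with h1 | h2
    · exact (ih (Nat.lt_succ_iff.mp h1)).trans (layerU_mono hcov hQ n)
    · have : m = n + 1 := le_antisymm h h2
      subst this; exact subset_rfl

/-- The first layer is a finite union of balls, hence closed. -/
lemma layerU_one_closed (hcov : IsCover σ η 𝒞) {Q : BallData} (hQ : Q ∈ 𝒞) :
    IsClosed (layerU 𝒞 Q 1) := by
  have hfin : {W | W ∈ 𝒞 ∧ (ballSet W ∩ layerU 𝒞 Q 0).Nonempty}.Finite := by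
    apply Set.Finite.subset ((hcov.overlap_finite Q hQ).insert Q)
    rintro W ⟨hW, hmeet⟩
    rcases eq_or_ne W Q with h | h
    · exact Set.mem_insert_iff.mpr (Or.inl h)
    · refine Set.mem_insert_iff.mpr (Or.inr ⟨hW, h, ?_⟩)
      obtain ⟨p, hp1, hp2⟩ := hmeet
      exact ⟨p, hp2, hp1⟩
  have : layerU 𝒞 Q 1 = ⋃ W ∈ {W | W ∈ 𝒞 ∧ (ballSet W ∩ layerU 𝒞 Q 0).Nonempty}, ballSet W := rfl
  rw [this]
  exact hfin.isClosed_biUnion (fun W _ => Metric.isClosed_closedBall)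

/-- Radius comparability for intersecting balls of the cover. -/
lemma radius_comp (hcov : IsCover σ η 𝒞) (hη : 0 < η) {W T : BallData}
    (hW : W ∈ 𝒞) (hT : T ∈ 𝒞) (hmeet : (ballSet W ∩ ballSet T).Nonempty) :
    T.2 / η ≤ W.2 := by
  have h1 := hcov.comparable_lb W hW T hT hmeet
  have hWpos : (0:ℝ) < W.2 := lt_of_lt_of_le one_pos (hcov.radius_ge_one W hW)
  have hTpos : (0:ℝ) < T.2 := lt_of_lt_of_le one_pos (hcov.radius_ge_one T hT)
  have hc : (0:ℝ) < (4 * Real.pi / 3) ^ ((1:ℝ)/3) := by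
    apply Real.rpow_pos_of_pos
    positivity
  have hvol : ∀ (U : BallData), 0 < U.2 →
      ballVol U ^ ((1:ℝ)/3) = (4 * Real.pi / 3) ^ ((1:ℝ)/3) * U.2 := by
    intro U hU
    simp only [ballVol]
    rw [Real.mul_rpow (by positivity) (by positivity)]
    congr 1
    rw [show (U.2 ^ 3 : ℝ) = U.2 ^ (3:ℕ) from rfl, ← Real.rpow_natCast U.2 3,
      ← Real.rpow_mul hU.le]
    norm_num
  rw [hvol W hWpos, hvol T hTpos] at h1
  have h2 : (4 * Real.pi / 3) ^ ((1:ℝ)/3) * W.2 / ((4 * Real.pi / 3) ^ ((1:ℝ)/3) * T.2)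
      = W.2 / T.2 := by
    rw [mul_div_mul_left _ _ (ne_of_gt hc)]
  rw [h2] at h1
  have h3 : (1/η) * T.2 ≤ (W.2 / T.2) * T.2 := mul_le_mul_of_nonneg_right h1 hTpos.le
  rw [div_mul_cancel₀ _ (ne_of_gt hTpos)] at h3
  calc T.2 / η = (1/η) * T.2 := by ring
  _ ≤ W.2 := h3

lemma eta_ge_one (hcov : IsCover σ η 𝒞) (hη : 0 < η) {Q : BallData} (hQ : Q ∈ 𝒞) :
    1 ≤ η := by
  have hQpos : (0:ℝ) < Q.2 := lt_of_lt_of_le one_pos (hcov.radius_ge_one Q hQ)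
  have hvolpos : (0:ℝ) < ballVol Q ^ ((1:ℝ)/3) := by
    apply Real.rpow_pos_of_pos
    simp only [ballVol]
    positivity
  have h1 := hcov.comparable_lb Q hQ Q hQ (by
    obtain ⟨p, hp⟩ := ballSet_nonempty hcov hQ
    exact ⟨p, hp, hp⟩)
  rw [div_self (ne_of_gt hvolpos)] at h1
  rw [div_le_one hη] at h1
  exact h1

private lemma arithA {r h a t d ρ : ℝ} (hr : 1 ≤ r) (hh0 : 0 < h) (hh : h ≤ 1/2)
    (hρ : 2*h*r ≤ ρ) (ha : 0 < a) (hta : t = r + a) (htd : t ≤ d)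
    (hcon : d < r*(1+h)) : (d - t)*t ≤ 2*r*(ρ - a) - a^2 := by
  have har : a < h*r := by nlinarith
  have ht15 : t ≤ (3/2)*r := by nlinarith
  have hdt : d - t < h*r - a := by nlinarith
  have h1 : (d - t)*t ≤ (h*r - a)*((3/2)*r) := by
    apply mul_le_mul (le_of_lt hdt) ht15 (by nlinarith) (by nlinarith)
  have h2 : (h*r - a)*((3/2)*r) ≤ 2*r*(ρ - a) - a^2 := by
    nlinarith [sq_nonneg a, mul_pos hh0 (lt_of_lt_of_le one_pos hr)]
  linarith

set_option maxHeartbeats 2000000 in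
/-- Key quantitative lemma: a point outside the third layer of `B` is at distance at least
`r_B (1 + 1/(2η²))` from the center of `B`. -/
lemma key_dist {σ η : ℝ} {𝒞 : Set BallData} (hη : 0 < η) (hcov : IsCover σ η 𝒞)
    {B : BallData} (hB : B ∈ 𝒞) {y : E3} (hy : y ∉ layerU 𝒞 B 3) :
    B.2 * (1 + 1/(2*η^2)) ≤ dist B.1 y := by
  set r : ℝ := B.2 with hr_def
  have hr : 1 ≤ r := hcov.radius_ge_one B hB
  have hη1 : 1 ≤ η := eta_ge_one hcov hη hB
  set h : ℝ := 1/(2*η^2) with hh_def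
  have hh0 : 0 < h := by rw [hh_def]; positivity
  have hh : h ≤ 1/2 := by
    rw [hh_def]
    rw [div_le_div_iff₀ (by positivity) (by norm_num)]
    nlinarith
  have hy2 : y ∉ layerU 𝒞 B 2 := fun hm => hy (layerU_mono hcov hB 2 hm)
  have hy1 : y ∉ layerU 𝒞 B 1 := fun hm => hy2 (layerU_mono hcov hB 1 hm)
  have hy0 : y ∉ ballSet B := fun hm => hy1 (layerU_mono hcov hB 0 hm)
  set d : ℝ := dist B.1 y with hd_def
  have hdr : r < d := by
    by_contra hle
    push_neg at hle
    exact hy0 (by rw [ballSet, Metric.mem_closedBall, dist_comm]; exact hle)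
  by_contra hcon
  push_neg at hcon
  have hd0 : 0 < d := lt_trans (lt_of_lt_of_le one_pos hr) hdr
  set u : E3 := d⁻¹ • (y - B.1) with hu_def
  have hyB : ‖y - B.1‖ = d := by rw [← dist_eq_norm, dist_comm]
  have hu : ‖u‖ = 1 := by
    rw [hu_def, norm_smul, Real.norm_eq_abs, abs_of_pos (by positivity), hyB]
    field_simp
  set s : ℝ → E3 := fun t => B.1 + t • u with hs_def
  have hs_dist : ∀ t : ℝ, 0 ≤ t → dist (s t) B.1 = t := by
    intro t ht
    rw [hs_def]
    simp only [dist_eq_norm, add_sub_cancel_left, norm_smul, Real.norm_eq_abs, hu,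
      abs_of_nonneg ht, mul_one]
  have hsd : s d = y := by
    rw [hs_def, hu_def]
    simp only [smul_smul]
    rw [mul_inv_cancel₀ (ne_of_gt hd0), one_smul]
    abel
  have hscont : Continuous s := by
    rw [hs_def]
    exact continuous_const.add (continuous_id.smul continuous_const)
  have hs_sub : ∀ t t' : ℝ, s t - s t' = (t - t') • u := by
    intro t t'
    simp only [hs_def]
    rw [sub_smul]
    abel
  have hs_dist2 : ∀ t t' : ℝ, dist (s t) (s t') = |t - t'| := by
    intro t t'
    rw [dist_eq_norm, hs_sub, norm_smul, Real.norm_eq_abs, hu, mul_one]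
  have hs0 : s 0 = B.1 := by simp [hs_def]
  set S₁ : Set ℝ := Set.Icc 0 d ∩ s ⁻¹' (layerU 𝒞 B 1) with hS₁_def
  have hS₁closed : IsClosed S₁ :=
    IsClosed.inter isClosed_Icc ((layerU_one_closed hcov hB).preimage hscont)
  have hrS : r ∈ S₁ := by
    constructor
    · exact ⟨by linarith, le_of_lt hdr⟩
    · have hmem : s r ∈ ballSet B := by
        rw [ballSet, Metric.mem_closedBall, hs_dist r (by linarith)]
      exact layerU_mono hcov hB 0 hmem
  have hbdd : BddAbove S₁ := ⟨d, fun t ht => ht.1.2⟩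
  set t₁ : ℝ := sSup S₁ with ht₁_def
  have ht₁S : t₁ ∈ S₁ := hS₁closed.csSup_mem ⟨r, hrS⟩ hbdd
  have hrt₁ : r ≤ t₁ := le_csSup hbdd hrS
  have ht₁d : t₁ ≤ d := ht₁S.1.2
  have hw₁ : s t₁ ∈ layerU 𝒞 B 1 := ht₁S.2
  have hnot1 : ∀ t, t₁ < t → t ≤ d → s t ∉ layerU 𝒞 B 1 := by
    intro t h1 h2 hmem
    have : t ∈ S₁ := ⟨⟨by linarith, h2⟩, hmem⟩
    exact absurd (le_csSup hbdd this) (not_le.mpr h1)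
  have hmissB : ∀ t, t₁ < t → t ≤ d → ∀ W, W ∈ 𝒞 → s t ∈ ballSet W →
      W.2 + r < dist W.1 B.1 := by
    intro t h1 h2 W hW hsW
    apply far_of_disjoint (le_trans zero_le_one (hcov.radius_ge_one W hW)) (by linarith)
    intro hne
    have hne' : (ballSet W ∩ layerU 𝒞 B 0).Nonempty := hne
    exact hnot1 t h1 h2 (ballSet_subset_layerU_succ hW hne' hsW)
  by_cases hcase : ∃ t, (t₁ < t ∧ t ≤ d) ∧ s t ∈ layerU 𝒞 B 2
  · -- Case A: the segment meets layer 2 beyond t₁; then that ball reaches y.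
    obtain ⟨t, ⟨htt₁, htd⟩, hm2⟩ := hcase
    obtain ⟨W, ⟨hW, hWmeet⟩, hzW⟩ := mem_layerU_succ.mp hm2
    obtain ⟨p, hpW, hp1⟩ := hWmeet
    obtain ⟨T, ⟨hT, hTmeet⟩, hpT⟩ := mem_layerU_succ.mp hp1
    have hT2 : r/η ≤ T.2 := radius_comp hcov hη hT hB (by
      obtain ⟨q, hq1, hq2⟩ := hTmeet
      exact ⟨q, hq1, hq2⟩)
    have hW2 : T.2/η ≤ W.2 := radius_comp hcov hη hW hT ⟨p, hpW, hpT⟩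
    have hW2' : 2*h*r ≤ W.2 := by
      have e1 : r/η/η ≤ T.2/η := by gcongr
      have e2 : 2*h*r = r/η/η := by rw [hh_def]; field_simp
      linarith
    have hsep : W.2 + r < dist W.1 B.1 := hmissB t htt₁ htd W hW hzW
    have ht0 : (0:ℝ) < t := lt_of_le_of_lt (le_trans (by linarith) hrt₁) htt₁
    set a : ℝ := t - r with ha_def
    have ha : 0 < a := by rw [ha_def]; linarith
    have hdistz : dist (s t) B.1 = r + a := by
      rw [hs_dist t (le_of_lt ht0), ha_def]; ring
    have hzW' : dist (s t) W.1 ≤ W.2 := by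
      rw [← Metric.mem_closedBall]; exact hzW
    have hO := lemO (x₀ := B.1) (c := W.1) (z := s t) (ρ := W.2) (ρ₀ := r) (a := a)
      (by linarith) hsep hzW' hdistz
    have hstB : s t - B.1 = t • u := by
      rw [← hs0, hs_sub, sub_zero]
    have hOin : 2*r*(W.2 - a) - a^2 ≤ 2 * (t * ⟪W.1 - s t, u⟫) := by
      rw [hstB, real_inner_smul_right] at hO
      linarith
    have hδ0 : (0:ℝ) ≤ d - t := by linarith
    have harith : (d - t)*t ≤ 2*r*(W.2 - a) - a^2 :=
      arithA hr hh0 hh hW2' ha (by rw [ha_def]; ring) htd hcon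
    have hδ : d - t ≤ 2 * ⟪W.1 - s t, u⟫ := by
      have h1 : (d - t) * t ≤ (2 * ⟪W.1 - s t, u⟫) * t := by nlinarith
      exact le_of_mul_le_mul_right h1 ht0
    have hreach : dist (s t + (d - t) • u) W.1 ≤ W.2 := reach hu hδ0 hzW' hδ
    have hyW : y ∈ ballSet W := by
      have he : s t + (d - t) • u = s d := by
        have hds := hs_sub d t
        rw [← hds]
        abel
      rw [he, hsd] at hreach
      rw [ballSet, Metric.mem_closedBall]
      exact hreach
    exact hy2 (ballSet_subset_layerU_succ hW ⟨p, hpW, hp1⟩ hyW)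
  · -- Case B: no point of the segment beyond t₁ lies in layer 2.
    push_neg at hcase
    have ht₁d' : t₁ < d := by
      rcases lt_or_eq_of_le ht₁d with h | h
      · exact h
      · exfalso; apply hy1; rw [← hsd, ← h]; exact hw₁
    set C : ℝ := min (1/100) (d - t₁) with hC_def
    have hC0 : 0 < C := lt_min (by norm_num) (by linarith)
    have hC1 : C ≤ 1/100 := min_le_left _ _
    have hC2 : C ≤ d - t₁ := min_le_right _ _
    set σf : ℕ → ℝ := fun k => C / (k+1) with hσf_def
    have hσpos : ∀ k, 0 < σf k := by
      intro k; simp only [hσf_def]; positivity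
    have hσle : ∀ k, σf k ≤ C := by
      intro k
      simp only [hσf_def]
      apply div_le_self hC0.le
      have : (0:ℝ) ≤ (k:ℝ) := Nat.cast_nonneg k
      linarith
    set tk : ℕ → ℝ := fun k => t₁ + σf k with htk_def
    have htk1 : ∀ k, t₁ < tk k := fun k => by
      simp only [htk_def]; linarith [hσpos k]
    have htkd : ∀ k, tk k ≤ d := fun k => by
      simp only [htk_def]; linarith [hσle k, hC2]
    set qk : ℕ → E3 := fun k => s (tk k) with hqk_def
    have hq2 : ∀ k, qk k ∉ layerU 𝒞 B 2 := fun k => hcase (tk k) ⟨htk1 k, htkd k⟩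
    have hq1 : ∀ k, qk k ∉ layerU 𝒞 B 1 := fun k hm => hq2 k (layerU_mono hcov hB 1 hm)
    choose W hWc hqW using fun k => hcov.covers (qk k)
    obtain ⟨T₁, ⟨hT₁c, hT₁meet⟩, hw₁T⟩ := mem_layerU_succ.mp hw₁
    have hρ₁ : 1 ≤ T₁.2 := hcov.radius_ge_one T₁ hT₁c
    have hT₁sub : ballSet T₁ ⊆ layerU 𝒞 B 1 := ballSet_subset_layerU_succ hT₁c hT₁meet
    have hWT : ∀ k, ¬ (ballSet (W k) ∩ ballSet T₁).Nonempty := by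
      intro k hne
      obtain ⟨pt, hptW, hptT⟩ := hne
      exact hq2 k (ballSet_subset_layerU_succ (hWc k) ⟨pt, hptW, hT₁sub hptT⟩ (hqW k))
    have hsepk : ∀ k, (W k).2 + T₁.2 < dist (W k).1 T₁.1 := fun k =>
      far_of_disjoint (le_trans zero_le_one (hcov.radius_ge_one _ (hWc k))) (by linarith)
        (hWT k)
    set ak : ℕ → ℝ := fun k => dist (qk k) T₁.1 - T₁.2 with hak_def
    have hqs : ∀ k, dist (qk k) (s t₁) = σf k := by
      intro k
      simp only [hqk_def]
      rw [hs_dist2]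
      rw [show tk k - t₁ = σf k from by simp only [htk_def]; ring]
      exact abs_of_pos (hσpos k)
    have hak0 : ∀ k, 0 < ak k := by
      intro k
      simp only [hak_def, sub_pos]
      by_contra hle
      push_neg at hle
      exact hq1 k (hT₁sub (by rw [ballSet, Metric.mem_closedBall]; exact hle))
    have hak1 : ∀ k, ak k ≤ σf k := by
      intro k
      have h1 := dist_triangle (qk k) (s t₁) T₁.1
      have h2 : dist (s t₁) T₁.1 ≤ T₁.2 := by
        rw [← Metric.mem_closedBall]; exact hw₁T
      simp only [hak_def]
      linarith [hqs k]
    have hdisteq : ∀ k, dist (qk k) T₁.1 = T₁.2 + ak k := by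
      intro k; simp only [hak_def]; ring
    have hqq : ∀ k j, dist (qk k) (qk j) ≤ 1/100 := by
      intro k j
      simp only [hqk_def]
      rw [hs_dist2]
      rw [show tk k - tk j = σf k - σf j from by simp only [htk_def]; ring]
      have h1 := hσpos k; have h2 := hσpos j
      have h3 := hσle k; have h4 := hσle j
      rw [abs_le]
      exact ⟨by linarith, by linarith⟩
    have hmeet : ∀ k j, (ballSet (W k) ∩ ballSet (W j)).Nonempty := by
      intro k j
      apply balls_meet (le_trans zero_le_one (hcov.radius_ge_one _ (hWc k)))
        (le_trans zero_le_one (hcov.radius_ge_one _ (hWc j)))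
      exact squeezed_balls_meet hρ₁ (hcov.radius_ge_one _ (hWc k))
        (hcov.radius_ge_one _ (hWc j)) (hak0 k) (le_trans (hak1 k) (le_trans (hσle k) hC1))
        (hak0 j) (le_trans (hak1 j) (le_trans (hσle j) hC1)) (hdisteq k) (hdisteq j)
        (hqq k j) (by rw [← Metric.mem_closedBall]; exact hqW k)
        (by rw [← Metric.mem_closedBall]; exact hqW j) (hsepk k) (hsepk j)
    -- pigeonhole: infinitely many k share the same ball
    have hrangefin : (Set.range W).Finite := by
      apply Set.Finite.subset ((hcov.overlap_finite (W 0) (hWc 0)).insert (W 0))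
      rintro _ ⟨k, rfl⟩
      rcases eq_or_ne (W k) (W 0) with hkeq | hkne
      · exact Set.mem_insert_iff.mpr (Or.inl hkeq)
      · exact Set.mem_insert_iff.mpr (Or.inr ⟨hWc k, hkne, hmeet 0 k⟩)
    have hfiber : ∃ V, V ∈ Set.range W ∧ {k | W k = V}.Infinite := by
      by_contra hcon2
      push_neg at hcon2
      have hfin : (Set.univ : Set ℕ).Finite := by
        apply Set.Finite.subset
          (hrangefin.biUnion (fun V hV => (hcon2 V hV)))
        intro k _
        exact Set.mem_biUnion ⟨k, rfl⟩ rfl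
      exact Set.infinite_univ hfin
    obtain ⟨V, hVr, hVinf⟩ := hfiber
    have hVc : V ∈ 𝒞 := by
      obtain ⟨k0, hk0⟩ := hVr
      rw [← hk0]; exact hWc k0
    have hfiber_large : ∀ N : ℕ, ∃ k, W k = V ∧ N ≤ k := by
      intro N
      by_contra hcon3
      push_neg at hcon3
      apply hVinf
      apply Set.Finite.subset (Set.finite_Iio N)
      intro k hk
      exact hcon3 k hk
    have hw₁V : s t₁ ∈ ballSet V := by
      rw [ballSet, Metric.mem_closedBall]
      apply le_of_forall_pos_le_add
      intro ε hε
      obtain ⟨N, hN⟩ := exists_nat_gt (C/ε)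
      obtain ⟨k, hkV, hkN⟩ := hfiber_large N
      have hσε : σf k < ε := by
        have h1 : C/ε < (N:ℝ) := hN
        have h2 : (N:ℝ) ≤ (k:ℝ) := Nat.cast_le.mpr hkN
        rw [div_lt_iff₀ hε] at h1
        have h3 : ε * (N:ℝ) ≤ ε * ((k:ℝ)+1) := by
          apply mul_le_mul_of_nonneg_left (by linarith) hε.le
        have h4 : (0:ℝ) < (k:ℝ)+1 := by positivity
        simp only [hσf_def]
        rw [div_lt_iff₀ h4]
        calc C < (N:ℝ) * ε := h1
        _ = ε * (N:ℝ) := by ring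
        _ ≤ ε * ((k:ℝ)+1) := h3
        _ = ε * ((k:ℝ)+1) := rfl
      calc dist (s t₁) V.1 ≤ dist (s t₁) (qk k) + dist (qk k) V.1 := dist_triangle _ _ _
      _ ≤ σf k + V.2 := by
          apply add_le_add
          · rw [dist_comm]; exact le_of_eq (hqs k)
          · rw [← Metric.mem_closedBall, ← hkV]
            exact hqW k
      _ ≤ V.2 + ε := by linarith
    obtain ⟨k', hk'V, _⟩ := hfiber_large 0
    apply hq2 k'
    apply ballSet_subset_layerU_succ hVc ⟨s t₁, hw₁V, hw₁⟩
    rw [← hk'V]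
    exact hqW k'

end CoverLemmas

/-- Comparability of `|x−y|` and `|x_B−y|` for `x ∈ B ∈ 𝒞` and `y ∉ B⁽³⁾` (consequence
(3.7) of Lemma 3.4): `|x−y| ≥ ((1−β)/2)|x_B−y|` and `|x_B−y| ≥ ((1−β)/2)|x−y|`, with
`β = (1 + 2/η²)^{-1/2}`. -/
theorem dist_point_vs_center_comparable (σ η : ℝ) (hσ : 0 < σ) (hη : 0 < η)
    (𝒞 : Set BallData) (hcov : IsCover σ η 𝒞)
    (B : BallData) (hB : B ∈ 𝒞) (x : E3) (hx : x ∈ ballSet B)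
    (y : E3) (hy : y ∉ layerU 𝒞 B 3) :
    ((1 - (Real.sqrt (1 + 2 / η ^ 2))⁻¹) / 2) * dist B.1 y ≤ dist x y ∧
    ((1 - (Real.sqrt (1 + 2 / η ^ 2))⁻¹) / 2) * dist x y ≤ dist B.1 y := by
  have hr : 1 ≤ B.2 := hcov.radius_ge_one B hB
  set r : ℝ := B.2 with hr_def
  set S : ℝ := Real.sqrt (1 + 2 / η ^ 2) with hS_def
  have hX0 : (0:ℝ) ≤ 1 + 2 / η ^ 2 := by positivity
  have hs1 : 1 ≤ S := by
    rw [hS_def, show (1:ℝ) = Real.sqrt 1 from (Real.sqrt_one).symm]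
    apply Real.sqrt_le_sqrt
    rw [Real.sqrt_one]
    have : (0:ℝ) ≤ 2 / η ^ 2 := by positivity
    linarith
  have hS0 : (0:ℝ) < S := lt_of_lt_of_le one_pos hs1
  set b : ℝ := S⁻¹ with hb_def
  have hb0 : 0 < b := by rw [hb_def]; positivity
  have hb1 : b ≤ 1 := by rw [hb_def]; exact inv_le_one_of_one_le₀ hs1
  have hs2 : S^2 = 1 + 2 / η ^ 2 := Real.sq_sqrt hX0
  have hkey : r * (1 + 1/(2*η^2)) ≤ dist B.1 y := key_dist hη hcov hB hy
  set d : ℝ := dist B.1 y with hd_def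
  have hη0 : η ≠ 0 := ne_of_gt hη
  have hh_eq : (1:ℝ)/(2*η^2) = (S^2 - 1)/4 := by
    rw [hs2]
    field_simp
    ring
  have hhpos : (0:ℝ) < 1/(2*η^2) := by positivity
  have hmain : 2 ≤ (1 + 1/(2*η^2)) * (1 + b) := by
    rw [hh_eq, hb_def]
    have e1 : 1 + (S^2-1)/4 = (S^2+3)/4 := by ring
    have e2 : 1 + S⁻¹ = (S+1)/S := by
      rw [add_div, div_self (ne_of_gt hS0), inv_eq_one_div]
    have hexp : (1 + (S^2-1)/4) * (1 + S⁻¹) = (S^2+3)*(S+1)/(4*S) := by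
      rw [e1, e2, div_mul_div_comm]
    rw [hexp, le_div_iff₀ (by positivity)]
    nlinarith [mul_nonneg (sq_nonneg (S-1)) (by linarith : (0:ℝ) ≤ S + 3)]
  have hrd : r ≤ d := by nlinarith
  have hq : r ≤ d * (1+b)/2 := by
    have h1 : r * ((1 + 1/(2*η^2)) * (1+b)) ≤ d * (1+b) := by
      have := mul_le_mul_of_nonneg_right hkey (by linarith : (0:ℝ) ≤ 1+b)
      linarith [this, mul_assoc r (1 + 1/(2*η^2)) (1+b)]
    have h2 : r * 2 ≤ r * ((1+1/(2*η^2))*(1+b)) :=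
      mul_le_mul_of_nonneg_left hmain (by linarith)
    linarith
  have hxB : dist B.1 x ≤ r := by
    rw [dist_comm, ← Metric.mem_closedBall]
    exact hx
  constructor
  · have htri : d ≤ dist B.1 x + dist x y := dist_triangle B.1 x y
    have hgoal : (1-b)/2 * d ≤ d - r := by linarith
    linarith
  · have htri2 : dist x y ≤ dist x B.1 + d := dist_triangle x B.1 y
    have hxB' : dist x B.1 ≤ r := by
      rw [← Metric.mem_closedBall]
      exact hx
    have h5 : (1-b)/2 * dist x y ≤ (1-b)/2 * (r + d) := by
      apply mul_le_mul_of_nonneg_left (by linarith) (by linarith)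
    have h6 : (1-b)/2 * (r+d) ≤ (1/2) * (d + d) := by
      apply mul_le_mul (by linarith) (by linarith) (by linarith) (by norm_num)
    linarith

end
end

section
/- Let Q ∈ 𝒞. Then the sum over all balls Q' ∈ 𝒞 with Q' ⊄ Q^{(3)} satisfies ∑_{Q'∈𝒞, Q'⊄Q^{(3)}} |Q'|^{1/3}/|x_Q − x_{Q'}|⁴ ≤ C·|Q|^{−1/3}, where C depends only on σ and η. -/
open MeasureTheory Real Set Metric Filter
open scoped BigOperators ENNReal

noncomputable section

variable {F : Type} [NormedAddCommGroup F] [NormedSpace ℝ F]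

/-! ### Auxiliary lemmas for the summation estimate -/

lemma aux_ball_nonempty {Q : BallData} (h0 : 0 ≤ Q.2) : (ballSet Q).Nonempty :=
  ⟨Q.1, Metric.mem_closedBall_self h0⟩

lemma aux_ballQ_subset_layer1 {𝒞 : Set BallData} {Q : BallData} (hQ : Q ∈ 𝒞) (h0 : 0 ≤ Q.2) :
    ballSet Q ⊆ layerU 𝒞 Q 1 := by
  intro y hy
  have hne : (ballSet Q ∩ layerU 𝒞 Q 0).Nonempty := by
    simpa only [layerU, Set.inter_self] using aux_ball_nonempty h0
  exact Set.mem_biUnion (show Q ∈ {B | B ∈ 𝒞 ∧ (ballSet B ∩ layerU 𝒞 Q 0).Nonempty} from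
    ⟨hQ, hne⟩) hy

lemma aux_ballQ_subset_layer2 {𝒞 : Set BallData} {Q : BallData} (hQ : Q ∈ 𝒞) (h0 : 0 ≤ Q.2) :
    ballSet Q ⊆ layerU 𝒞 Q 2 := by
  intro y hy
  have hne : (ballSet Q ∩ layerU 𝒞 Q 1).Nonempty :=
    ⟨Q.1, Metric.mem_closedBall_self h0, aux_ballQ_subset_layer1 hQ h0 (Metric.mem_closedBall_self h0)⟩
  exact Set.mem_biUnion (show Q ∈ {B | B ∈ 𝒞 ∧ (ballSet B ∩ layerU 𝒞 Q 1).Nonempty} from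
    ⟨hQ, hne⟩) hy

lemma aux_far_disjoint {𝒞 : Set BallData} {Q b : BallData} (hQ : Q ∈ 𝒞) (h0 : 0 ≤ Q.2)
    (hb : b ∈ 𝒞) (hfar : ¬ ballSet b ⊆ layerU 𝒞 Q 3) :
    ∀ x ∈ ballSet b, x ∉ ballSet Q := by
  intro x hx hxQ
  apply hfar
  intro y hy
  have hx2 : x ∈ layerU 𝒞 Q 2 := aux_ballQ_subset_layer2 hQ h0 hxQ
  exact Set.mem_biUnion (show b ∈ {B | B ∈ 𝒞 ∧ (ballSet B ∩ layerU 𝒞 Q 2).Nonempty} from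
    ⟨hb, ⟨x, hx, hx2⟩⟩) hy

lemma aux_dist_gt_of_disjoint {c c' : E3} {r r' : ℝ} (hr : 0 ≤ r) (hr' : 0 ≤ r')
    (h : ∀ x ∈ Metric.closedBall c' r', x ∉ Metric.closedBall c r) :
    r + r' < dist c c' := by
  have hD' : r' < dist c c' := by
    by_contra hle
    push_neg at hle
    have hc : c ∈ Metric.closedBall c' r' := by
      rw [Metric.mem_closedBall]; exact hle
    exact h c hc (Metric.mem_closedBall_self hr)
  have hD0 : 0 < dist c c' := lt_of_le_of_lt hr' hD'
  set D : ℝ := dist c c' with hD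
  set p : E3 := c' + (r' / D) • (c - c') with hp
  have hnorm : ‖c - c'‖ = D := by rw [hD, dist_eq_norm]
  have hp1 : p ∈ Metric.closedBall c' r' := by
    rw [Metric.mem_closedBall, dist_eq_norm, hp, add_sub_cancel_left, norm_smul,
      Real.norm_eq_abs, abs_of_nonneg (by positivity), hnorm]
    rw [div_mul_cancel₀ _ (ne_of_gt hD0)]
  have hp2 : dist p c = D - r' := by
    have hpc : p - c = (1 - r' / D) • (c' - c) := by
      rw [hp]; module
    rw [dist_eq_norm, hpc, norm_smul, Real.norm_eq_abs,
      abs_of_nonneg (by rw [sub_nonneg, div_le_one hD0]; exact hD'.le),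
      show ‖c' - c‖ = D from by rw [← hnorm, norm_sub_rev]]
    field_simp
  have hpQ := h p hp1
  rw [Metric.mem_closedBall, hp2] at hpQ
  push_neg at hpQ
  linarith

/-- Summation estimate (3.9): for every `Q ∈ 𝒞`,
`∑_{Q' ∈ 𝒞, Q' ⊄ Q⁽³⁾} |Q'|^{1/3}/|x_Q − x_{Q'}|⁴ ≤ C |Q|^{-1/3}` with `C = C(σ,η)`. -/
theorem sum_far_balls (σ η : ℝ) (hσ : 0 < σ) (hη : 0 < η) :
    ∃ C > (0:ℝ), ∀ 𝒞 : Set BallData, IsCover σ η 𝒞 → ∀ Q ∈ 𝒞,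
      Summable (fun B' : {B : BallData // B ∈ 𝒞 ∧ ¬ ballSet B ⊆ layerU 𝒞 Q 3} =>
        ballVol B'.1 ^ ((1:ℝ)/3) / dist Q.1 B'.1.1 ^ 4) ∧
      (∑' B' : {B : BallData // B ∈ 𝒞 ∧ ¬ ballSet B ⊆ layerU 𝒞 Q 3},
          ballVol B'.1 ^ ((1:ℝ)/3) / dist Q.1 B'.1.1 ^ 4)
        ≤ C * ballVol Q ^ (-(1:ℝ)/3) := by
  classical
  set V₁ : ℝ := (volume (Metric.ball (0:E3) 1)).toReal with hV₁def
  have hV₁ : 0 < V₁ := by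
    rw [hV₁def]
    exact ENNReal.toReal_pos (ne_of_gt (Metric.measure_ball_pos volume 0 one_pos))
      (MeasureTheory.measure_ball_lt_top).ne
  have hdim3 : Module.finrank ℝ E3 = 3 := by
    simp [E3, finrank_euclideanSpace]
  set P : ℝ := 4 * Real.pi / 3 with hPdef
  have hP : 0 < P := by rw [hPdef]; positivity
  set κ : ℝ := 16 * P / V₁ with hκdef
  have hκ : 0 < κ := by rw [hκdef]; exact div_pos (by positivity) hV₁
  have h3V : (0:ℝ) < 3 * V₁ := by linarith
  refine ⟨κ * (1 + σ) * (3 * V₁) * P ^ ((1:ℝ)/3), ?_, ?_⟩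
  · exact mul_pos (mul_pos (mul_pos hκ (by linarith)) h3V) (Real.rpow_pos_of_pos hP _)
  intro 𝒞 hcov Q hQ
  set c : E3 := Q.1 with hc
  set r : ℝ := Q.2 with hrdef
  have hr1 : 1 ≤ r := hcov.radius_ge_one Q hQ
  have hr0 : 0 < r := by linarith
  set f : E3 → ℝ := fun x => ‖x - c‖⁻¹ ^ 4 with hfdef
  set g0 : ℝ → ℝ := fun t => if r < t then t⁻¹ ^ 4 else 0 with hg0def
  set g : E3 → ℝ := fun x => g0 ‖x - c‖ with hgdef
  have hf_nonneg : ∀ x, 0 ≤ f x := fun x => by rw [hfdef]; positivity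
  have hg_nonneg : ∀ x, 0 ≤ g x := by
    intro x
    rw [hgdef, hg0def]
    dsimp only
    split <;> positivity
  have hg_eq : ∀ x : E3, r < ‖x - c‖ → g x = f x := by
    intro x hx
    rw [hgdef, hg0def, hfdef]
    dsimp only
    rw [if_pos hx]
  have hnormm : Measurable fun x : E3 => ‖x - c‖ :=
    (continuous_norm.comp (continuous_id.sub continuous_const)).measurable
  have hgm : Measurable g := by
    have h1 : Measurable fun x : E3 => if r < ‖x - c‖ then ‖x - c‖⁻¹ ^ 4 else 0 :=
      Measurable.ite (hnormm measurableSet_Ioi) ((hnormm.inv).pow_const 4) measurable_const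
    exact h1
  -- integrability of g
  have hg_int : Integrable g := by
    have h4 : (Module.finrank ℝ E3 : ℝ) < 4 := by rw [hdim3]; norm_num
    have hint : Integrable fun x : E3 => (1 + ‖x - c‖) ^ (-(4:ℝ)) :=
      (integrable_one_add_norm h4).comp_sub_right c
    refine (hint.const_mul 16).mono' hgm.aestronglyMeasurable (Filter.Eventually.of_forall ?_)
    intro x
    rw [hgdef, hg0def]
    dsimp only
    have ht0 : (0:ℝ) ≤ ‖x - c‖ := norm_nonneg _
    by_cases hrt : r < ‖x - c‖
    · rw [if_pos hrt]
      have ht1 : 1 ≤ ‖x - c‖ := le_trans hr1 hrt.le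
      have hA : (0:ℝ) < ‖x - c‖ ^ 4 := by positivity
      have hB : (0:ℝ) < (1 + ‖x - c‖) ^ 4 := by positivity
      have hle : (1 + ‖x - c‖) ^ 4 ≤ 16 * ‖x - c‖ ^ 4 := by
        calc (1 + ‖x - c‖) ^ 4 ≤ (2 * ‖x - c‖) ^ 4 := by
              apply pow_le_pow_left₀ (by linarith) (by linarith)
          _ = 16 * ‖x - c‖ ^ 4 := by ring
      have hrpow : (1 + ‖x - c‖) ^ (-(4:ℝ)) = ((1 + ‖x - c‖) ^ (4:ℕ))⁻¹ := by
        rw [show (-(4:ℝ)) = -((4:ℕ):ℝ) by norm_num, Real.rpow_neg (by linarith),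
          Real.rpow_natCast]
      rw [Real.norm_eq_abs, abs_of_nonneg (by positivity), inv_pow, hrpow,
        inv_eq_one_div, show (16:ℝ) * ((1 + ‖x - c‖) ^ (4:ℕ))⁻¹ = 16 / (1 + ‖x - c‖) ^ (4:ℕ)
          from by rw [div_eq_mul_inv], div_le_div_iff₀ hA hB]
      linarith
    · rw [if_neg hrt, norm_zero]
      positivity
  -- value of the integral of g
  have hinner : ∫ y in Ioi (0:ℝ), y ^ 2 • g0 y = r⁻¹ := by
    have hcg : ∀ y ∈ Ioi (0:ℝ), y ^ 2 • g0 y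
        = (Ioi r).indicator (fun t : ℝ => t ^ (-2:ℝ)) y := by
      intro y hy
      rw [Set.mem_Ioi] at hy
      have hyne : y ≠ 0 := ne_of_gt hy
      rw [hg0def]
      dsimp only
      by_cases hry : r < y
      · rw [Set.indicator_of_mem (Set.mem_Ioi.mpr hry), if_pos hry, smul_eq_mul,
          show (-2:ℝ) = -((2:ℕ):ℝ) by norm_num, Real.rpow_neg hy.le, Real.rpow_natCast]
        field_simp
      · rw [Set.indicator_of_notMem (by simpa using hry), if_neg hry, smul_zero]
    rw [setIntegral_congr_fun measurableSet_Ioi hcg,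
      MeasureTheory.integral_indicator measurableSet_Ioi,
      Measure.restrict_restrict measurableSet_Ioi,
      Set.inter_eq_self_of_subset_left (Set.Ioi_subset_Ioi hr0.le),
      integral_Ioi_rpow_of_lt (by norm_num) hr0]
    norm_num [Real.rpow_neg_one]
  have hgval : ∫ x, g x = 3 * (V₁ * r⁻¹) := by
    have h1 : ∫ x, g x = ∫ x : E3, g0 ‖x‖ := by
      rw [hgdef]
      exact MeasureTheory.integral_sub_right_eq_self (fun x : E3 => g0 ‖x‖) c
    rw [h1, MeasureTheory.integral_fun_norm_addHaar volume g0, hdim3,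
      show (3:ℕ) - 1 = 2 from rfl, hinner]
    simp [nsmul_eq_mul, smul_eq_mul, hV₁def, MeasureTheory.measureReal_def]
  have hQvol : ballVol Q ^ (-(1:ℝ)/3) = P ^ (-(1:ℝ)/3) * r⁻¹ := by
    have hbv : ballVol Q = P * r ^ 3 := by rw [ballVol, hPdef, hrdef]
    rw [hbv, Real.mul_rpow hP.le (by positivity)]
    congr 1
    rw [← Real.rpow_natCast r 3, ← Real.rpow_mul hr0.le]
    norm_num [Real.rpow_neg_one]
  -- per-ball facts
  have hdisjAll : ∀ B' : {B : BallData // B ∈ 𝒞 ∧ ¬ ballSet B ⊆ layerU 𝒞 Q 3},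
      ∀ x ∈ ballSet B'.1, x ∉ ballSet Q :=
    fun B' => aux_far_disjoint hQ (by rw [← hrdef]; exact hr0.le) B'.2.1 B'.2.2
  have hr'1 : ∀ B' : {B : BallData // B ∈ 𝒞 ∧ ¬ ballSet B ⊆ layerU 𝒞 Q 3}, 1 ≤ B'.1.2 :=
    fun B' => hcov.radius_ge_one B'.1 B'.2.1
  have hlbAll : ∀ B' : {B : BallData // B ∈ 𝒞 ∧ ¬ ballSet B ⊆ layerU 𝒞 Q 3},
      ∀ x ∈ ballSet B'.1, r < ‖x - c‖ := by
    intro B' x hx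
    have h := hdisjAll B' x hx
    have h2 : ¬ dist x c ≤ r := by
      intro hle
      exact h (by rw [ballSet, Metric.mem_closedBall, ← hc, ← hrdef]; exact hle)
    push_neg at h2
    rwa [← dist_eq_norm]
  have hDgt : ∀ B' : {B : BallData // B ∈ 𝒞 ∧ ¬ ballSet B ⊆ layerU 𝒞 Q 3},
      r + B'.1.2 < dist c B'.1.1 := by
    intro B'
    exact aux_dist_gt_of_disjoint hr0.le (by linarith [hr'1 B'])
      (fun x hx => hdisjAll B' x hx)
  have hD0 : ∀ B' : {B : BallData // B ∈ 𝒞 ∧ ¬ ballSet B ⊆ layerU 𝒞 Q 3},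
      0 < dist c B'.1.1 := by
    intro B'
    have := hDgt B'
    have := hr'1 B'
    linarith
  have hubAll : ∀ B' : {B : BallData // B ∈ 𝒞 ∧ ¬ ballSet B ⊆ layerU 𝒞 Q 3},
      ∀ x ∈ ballSet B'.1, ‖x - c‖ ≤ 2 * dist c B'.1.1 := by
    intro B' x hx
    have h1 : dist x B'.1.1 ≤ B'.1.2 := hx
    have h2 : B'.1.2 ≤ dist c B'.1.1 := by linarith [hDgt B', hr0]
    calc ‖x - c‖ = dist x c := (dist_eq_norm x c).symm
      _ ≤ dist x B'.1.1 + dist B'.1.1 c := dist_triangle _ _ _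
      _ ≤ B'.1.2 + dist c B'.1.1 := by rw [dist_comm B'.1.1 c]; linarith
      _ ≤ 2 * dist c B'.1.1 := by linarith
  have hintAll : ∀ B' : {B : BallData // B ∈ 𝒞 ∧ ¬ ballSet B ⊆ layerU 𝒞 Q 3},
      IntegrableOn f (ballSet B'.1) := by
    intro B'
    apply ContinuousOn.integrableOn_compact (isCompact_closedBall _ _)
    rw [hfdef]
    apply ContinuousOn.pow
    apply ContinuousOn.inv₀
      ((continuous_norm.comp (continuous_id.sub continuous_const)).continuousOn)
    intro x hx
    exact ne_of_gt (lt_trans hr0 (hlbAll B' x hx))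
  have hvolb : ∀ B' : {B : BallData // B ∈ 𝒞 ∧ ¬ ballSet B ⊆ layerU 𝒞 Q 3},
      (volume (ballSet B'.1)).toReal = B'.1.2 ^ 3 * V₁ := by
    intro B'
    have h0 : (0:ℝ) ≤ B'.1.2 := by linarith [hr'1 B']
    have hh := MeasureTheory.Measure.addHaar_closedBall (μ := (volume : Measure E3)) B'.1.1 h0
    rw [hdim3] at hh
    rw [show ballSet B'.1 = Metric.closedBall B'.1.1 B'.1.2 from rfl, hh,
      ENNReal.toReal_mul, ENNReal.toReal_ofReal (by positivity), ← hV₁def]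
  have hperball : ∀ B' : {B : BallData // B ∈ 𝒞 ∧ ¬ ballSet B ⊆ layerU 𝒞 Q 3},
      ballVol B'.1 ^ ((1:ℝ)/3) / dist c B'.1.1 ^ 4 ≤ κ * ∫ x in ballSet B'.1, f x := by
    intro B'
    have hbv1 : 1 ≤ ballVol B'.1 := by
      rw [ballVol]
      have hcube : 1 ≤ B'.1.2 ^ 3 := one_le_pow₀ (hr'1 B')
      nlinarith [Real.pi_gt_three]
    have hstep1 : ballVol B'.1 ^ ((1:ℝ)/3) ≤ ballVol B'.1 := by
      calc ballVol B'.1 ^ ((1:ℝ)/3) ≤ ballVol B'.1 ^ (1:ℝ) :=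
            Real.rpow_le_rpow_of_exponent_le hbv1 (by norm_num)
        _ = ballVol B'.1 := Real.rpow_one _
    have hD4 : (0:ℝ) < dist c B'.1.1 ^ 4 := by
      have := hD0 B'
      positivity
    have hlow : (2 * dist c B'.1.1)⁻¹ ^ 4 * (volume (ballSet B'.1)).toReal
        ≤ ∫ x in ballSet B'.1, f x := by
      rw [mul_comm, ← smul_eq_mul]
      apply MeasureTheory.setIntegral_ge_of_const_le measurableSet_closedBall
        (MeasureTheory.measure_closedBall_lt_top).ne _ (hintAll B')
      intro x hx
      show (2 * dist c B'.1.1)⁻¹ ^ 4 ≤ f x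
      rw [hfdef]
      dsimp only
      apply pow_le_pow_left₀ (by positivity)
      exact inv_anti₀ (lt_trans hr0 (hlbAll B' x hx)) (hubAll B' x hx)
    calc ballVol B'.1 ^ ((1:ℝ)/3) / dist c B'.1.1 ^ 4
        ≤ ballVol B'.1 / dist c B'.1.1 ^ 4 := (div_le_div_iff_of_pos_right hD4).mpr hstep1
      _ = κ * ((2 * dist c B'.1.1)⁻¹ ^ 4 * (B'.1.2 ^ 3 * V₁)) := by
          rw [ballVol, hκdef, hPdef]
          have hDne : dist c B'.1.1 ≠ 0 := ne_of_gt (hD0 B')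
          have hVne : V₁ ≠ 0 := ne_of_gt hV₁
          field_simp
          ring
      _ ≤ κ * ∫ x in ballSet B'.1, f x := by
          apply mul_le_mul_of_nonneg_left _ hκ.le
          rw [← hvolb B']
          exact hlow
  -- bounded multiplicity
  have hmono : ∀ s : Finset {B : BallData // B ∈ 𝒞 ∧ ¬ ballSet B ⊆ layerU 𝒞 Q 3}, ∀ x : E3,
      (∑ B' ∈ s, (ballSet B'.1).indicator f x) ≤ (1 + σ) * g x := by
    intro s x
    have hLHS : (∑ B' ∈ s, (ballSet B'.1).indicator f x)
        = ((s.filter fun B' => x ∈ ballSet B'.1).card : ℝ) * f x := by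
      rw [Finset.sum_congr rfl (fun B' _ => Set.indicator_apply (ballSet B'.1) f x),
        ← Finset.sum_filter, Finset.sum_const, nsmul_eq_mul]
    rw [hLHS]
    rcases (s.filter fun B' => x ∈ ballSet B'.1).eq_empty_or_nonempty with he | ⟨b₀, hb₀⟩
    · rw [he]
      simp only [Finset.card_empty, Nat.cast_zero, zero_mul]
      exact mul_nonneg (by linarith) (hg_nonneg x)
    · have hb₀s : x ∈ ballSet b₀.1 := (Finset.mem_filter.mp hb₀).2
      rw [hg_eq x (hlbAll b₀ x hb₀s)]
      apply mul_le_mul_of_nonneg_right _ (hf_nonneg x)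
      set T := s.filter fun B' => x ∈ ballSet B'.1 with hT
      set T' := T.image Subtype.val with hT'
      have hb₀T' : b₀.1 ∈ T' := Finset.mem_image_of_mem _ hb₀
      have hsub : ↑(T'.erase b₀.1) ⊆
          {B' | B' ∈ 𝒞 ∧ B' ≠ b₀.1 ∧ (ballSet b₀.1 ∩ ballSet B').Nonempty} := by
        intro B hB
        have hB' := Finset.mem_coe.mp hB
        rw [Finset.mem_erase] at hB'
        obtain ⟨hne, hBT'⟩ := hB'
        rw [hT', Finset.mem_image] at hBT'
        obtain ⟨B₂, hB₂T, rfl⟩ := hBT'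
        have hxB₂ : x ∈ ballSet B₂.1 := (Finset.mem_filter.mp hB₂T).2
        exact ⟨B₂.2.1, hne, ⟨x, hb₀s, hxB₂⟩⟩
      have hfin := hcov.overlap_finite b₀.1 b₀.2.1
      have hcard := hcov.overlap_card b₀.1 b₀.2.1
      have h1 : ((T'.erase b₀.1).card : ℝ) ≤ σ := by
        have h2 : (T'.erase b₀.1).card ≤
            {B' | B' ∈ 𝒞 ∧ B' ≠ b₀.1 ∧ (ballSet b₀.1 ∩ ballSet B').Nonempty}.ncard := by
          rw [← Set.ncard_coe_finset]
          exact Set.ncard_le_ncard hsub hfin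
        calc ((T'.erase b₀.1).card : ℝ) ≤ _ := Nat.cast_le.mpr h2
          _ ≤ σ := hcard
      have h3 : (T'.erase b₀.1).card + 1 = T.card := by
        rw [Finset.card_erase_add_one hb₀T', hT',
          Finset.card_image_of_injective _ Subtype.val_injective]
      rw [← h3]
      push_cast
      linarith
  -- the finite-sum bound
  have hbound : ∀ s : Finset {B : BallData // B ∈ 𝒞 ∧ ¬ ballSet B ⊆ layerU 𝒞 Q 3},
      (∑ B' ∈ s, ballVol B'.1 ^ ((1:ℝ)/3) / dist c B'.1.1 ^ 4)
        ≤ κ * (1 + σ) * (3 * V₁) * P ^ ((1:ℝ)/3) * ballVol Q ^ (-(1:ℝ)/3) := by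
    intro s
    have hs1 : (∑ B' ∈ s, ballVol B'.1 ^ ((1:ℝ)/3) / dist c B'.1.1 ^ 4)
        ≤ κ * ∑ B' ∈ s, ∫ x in ballSet B'.1, f x := by
      rw [Finset.mul_sum]
      exact Finset.sum_le_sum fun B' _ => hperball B'
    have hs2 : (∑ B' ∈ s, ∫ x in ballSet B'.1, f x) ≤ (1 + σ) * ∫ x, g x := by
      have he : ∀ B' ∈ s, ∫ x in ballSet B'.1, f x = ∫ x, (ballSet B'.1).indicator f x :=
        fun B' _ => (MeasureTheory.integral_indicator (show MeasurableSet (ballSet B'.1) from measurableSet_closedBall)).symm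
      rw [Finset.sum_congr rfl he,
        ← MeasureTheory.integral_finset_sum s (fun B' _ =>
          (MeasureTheory.integrable_indicator_iff (show MeasurableSet (ballSet B'.1) from measurableSet_closedBall)).mpr (hintAll B'))]
      calc (∫ x, ∑ B' ∈ s, (ballSet B'.1).indicator f x)
          ≤ ∫ x, (1 + σ) * g x := by
            apply MeasureTheory.integral_mono ?_ (hg_int.const_mul _) (fun x => hmono s x)
            exact MeasureTheory.integrable_finset_sum s (fun B' _ =>
              (MeasureTheory.integrable_indicator_iff (show MeasurableSet (ballSet B'.1) from measurableSet_closedBall)).mpr (hintAll B'))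
        _ = (1 + σ) * ∫ x, g x := MeasureTheory.integral_const_mul _ _
    have hPP : P ^ ((1:ℝ)/3) * P ^ (-(1:ℝ)/3) = 1 := by
      rw [← Real.rpow_add hP]
      norm_num
    calc (∑ B' ∈ s, ballVol B'.1 ^ ((1:ℝ)/3) / dist c B'.1.1 ^ 4)
        ≤ κ * ((1 + σ) * ∫ x, g x) := le_trans hs1 (mul_le_mul_of_nonneg_left hs2 hκ.le)
      _ = κ * (1 + σ) * (3 * V₁) * P ^ ((1:ℝ)/3) * ballVol Q ^ (-(1:ℝ)/3) := by
          rw [hgval, hQvol]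
          calc κ * ((1 + σ) * (3 * (V₁ * r⁻¹)))
              = κ * (1 + σ) * (3 * V₁) * (P ^ ((1:ℝ)/3) * P ^ (-(1:ℝ)/3)) * r⁻¹ := by
                rw [hPP]; ring
            _ = κ * (1 + σ) * (3 * V₁) * P ^ ((1:ℝ)/3) * (P ^ (-(1:ℝ)/3) * r⁻¹) := by ring
  have hnn : ∀ B' : {B : BallData // B ∈ 𝒞 ∧ ¬ ballSet B ⊆ layerU 𝒞 Q 3},
      0 ≤ ballVol B'.1 ^ ((1:ℝ)/3) / dist c B'.1.1 ^ 4 := by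
    intro B'
    apply div_nonneg _ (by positivity)
    apply Real.rpow_nonneg
    rw [ballVol]
    nlinarith [hr'1 B', Real.pi_gt_three, one_le_pow₀ (hr'1 B') (n := 3)]
  have hsummable : Summable (fun B' : {B : BallData // B ∈ 𝒞 ∧ ¬ ballSet B ⊆ layerU 𝒞 Q 3} =>
      ballVol B'.1 ^ ((1:ℝ)/3) / dist c B'.1.1 ^ 4) :=
    summable_of_sum_le hnn hbound
  exact ⟨hsummable, Summable.tsum_le_of_sum_le hsummable hbound⟩


end
end
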